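/- arXiv:2112.02976 — 6 statements merged into one kernel-verified Lean document; each statement's English description precedes it below -/
import Mathlib

section
/- Fix n ≥ 1, states i, j ∈ {1,…,n}, and a discount factor α ∈ (0,1). There exist two polynomials f and g in the n² variables (x_{kℓ})_{1≤k,ℓ≤n}, each of total degree at most n and with nonnegative coefficients, such that for every n×n row-stochastic matrix P one has g(P) > 0 and (1−α)·((I − α·P)⁻¹)_{ij} = f(P)/g(P), where f(P), g(P) denote the evaluations of f, g at the entries of P. -/
/-!
Since the rows of `P` sum to one, row `k` of `1 - α • P` is the convex combination
`∑ l, P k l • (eₖ - α • eₗ)`. Expanding the determinant multilinearly in the rows therefore writes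
`det (1 - α • P)`, and likewise every cofactor, as `∑ φ, (∏ k, P k (φ k)) * (value at Q_φ)`, where
`φ` ranges over the self-maps of the index set and `Q_φ` is the 0/1 stochastic matrix of `φ`:
a homogeneous polynomial of degree `n` in the entries of `P`. Its coefficients are nonnegative since
for every stochastic `Q` the Neumann series `(1 - α • Q)⁻¹ = ∑ αᵗ Qᵗ` has nonnegative entries and
`det (1 - α • Q) > 0` (it never vanishes along `t ↦ 1 - t • Q`, `0 ≤ t ≤ α`). Cramer's rule
`A⁻¹ = adj A / det A` finishes the proof.
-/

open Matrix

namespace Matrix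

variable {n : Type*} [Fintype n] [DecidableEq n]

theorem submatrix_mem_rowStochastic {R : Type*} [Semiring R] [PartialOrder R] [IsOrderedRing R]
    {M : Matrix n n R} (hM : M ∈ rowStochastic R n) (φ : n → n) :
    M.submatrix φ id ∈ rowStochastic R n :=
  mem_rowStochastic_iff_sum.2
    ⟨fun _ _ => nonneg_of_mem_rowStochastic hM, fun k => sum_row_of_mem_rowStochastic hM (φ k)⟩

section Neumann

attribute [local instance] Matrix.linftyOpNormedRing Matrix.linftyOpNormedAlgebra

variable {P : Matrix n n ℝ} {β : ℝ}

theorem linfty_opNorm_le_one_of_mem_rowStochastic (hP : P ∈ rowStochastic ℝ n) : ‖P‖ ≤ 1 := by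
  rw [linfty_opNorm_def, NNReal.coe_le_one, Finset.sup_le_iff]
  intro k _
  rw [← NNReal.coe_le_one, NNReal.coe_sum]
  simp_rw [coe_nnnorm, Real.norm_of_nonneg (nonneg_of_mem_rowStochastic hP),
    sum_row_of_mem_rowStochastic hP k, le_refl]

theorem linfty_opNorm_smul_lt_one_of_mem_rowStochastic (hP : P ∈ rowStochastic ℝ n)
    (hβ0 : 0 ≤ β) (hβ1 : β < 1) : ‖β • P‖ < 1 := by
  rw [norm_smul, Real.norm_of_nonneg hβ0]
  nlinarith [linfty_opNorm_le_one_of_mem_rowStochastic hP, norm_nonneg P]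

theorem isUnit_det_one_sub_smul_of_mem_rowStochastic (hP : P ∈ rowStochastic ℝ n)
    (hβ0 : 0 ≤ β) (hβ1 : β < 1) : IsUnit (1 - β • P).det :=
  isUnit_det_of_left_inverse
    (geom_series_mul_neg _ (linfty_opNorm_smul_lt_one_of_mem_rowStochastic hP hβ0 hβ1))

theorem inv_one_sub_smul_nonneg_of_mem_rowStochastic (hP : P ∈ rowStochastic ℝ n)
    (hβ0 : 0 ≤ β) (hβ1 : β < 1) (i j : n) : 0 ≤ (1 - β • P)⁻¹ i j := by
  have hnorm := linfty_opNorm_smul_lt_one_of_mem_rowStochastic hP hβ0 hβ1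
  have hsum := (summable_geometric_of_norm_lt_one hnorm).hasSum
  rw [inv_eq_left_inv (geom_series_mul_neg _ hnorm)]
  refine (Pi.hasSum.1 (Pi.hasSum.1 hsum i) j).nonneg fun t => ?_
  rw [smul_pow, Matrix.smul_apply, smul_eq_mul]
  exact mul_nonneg (pow_nonneg hβ0 t) (nonneg_of_mem_rowStochastic (pow_mem hP t))

end Neumann

theorem det_one_sub_smul_pos_of_mem_rowStochastic {P : Matrix n n ℝ} {α : ℝ}
    (hP : P ∈ rowStochastic ℝ n) (hα0 : 0 ≤ α) (hα1 : α < 1) : 0 < (1 - α • P).det := by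
  by_contra! hle
  have hcont : ContinuousOn (fun t : ℝ => (1 - t • P).det) (Set.Icc 0 α) :=
    (continuous_const.sub (continuous_id.smul continuous_const)).matrix_det.continuousOn
  obtain ⟨t, ht, hdet⟩ := intermediate_value_Icc' hα0 hcont ⟨hle, by simp⟩
  exact (isUnit_det_one_sub_smul_of_mem_rowStochastic hP ht.1 (ht.2.trans_lt hα1)).ne_zero hdet

theorem inv_apply_eq_adjugate_apply_div {K : Type*} [Field K] (A : Matrix n n K) (i j : n) :
    A⁻¹ i j = A.adjugate i j / A.det := by
  rw [inv_def, Matrix.smul_apply, smul_eq_mul, Ring.inverse_eq_inv', inv_mul_eq_div]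

theorem adjugate_one_sub_smul_nonneg_of_mem_rowStochastic {P : Matrix n n ℝ} {α : ℝ}
    (hP : P ∈ rowStochastic ℝ n) (hα0 : 0 ≤ α) (hα1 : α < 1) (i j : n) :
    0 ≤ (1 - α • P).adjugate i j := by
  have hdet := det_one_sub_smul_pos_of_mem_rowStochastic hP hα0 hα1
  have hinv := inv_one_sub_smul_nonneg_of_mem_rowStochastic hP hα0 hα1 i j
  rw [inv_apply_eq_adjugate_apply_div] at hinv
  simpa [div_mul_cancel₀ _ hdet.ne'] using mul_nonneg hinv hdet.le

section RowExpansion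

variable {R : Type*} [CommRing R]

theorem det_eq_sum_of_row_eq_sum {M : Matrix n n R} (c : n → n → R) (v : n → n → n → R)
    (h : ∀ k, M k = ∑ l, c k l • v k l) :
    M.det = ∑ φ : n → n, (∏ k, c k (φ k)) * (of fun k => v k (φ k)).det := by
  obtain rfl : M = fun k => ∑ l, c k l • v k l := funext h
  change detRowAlternating.toMultilinearMap (fun k => ∑ l, c k l • v k l) = _
  simp_rw [MultilinearMap.map_sum, MultilinearMap.map_smul_univ, smul_eq_mul]
  rfl

theorem adjugate_apply_eq_sum_of_row_eq_sum {M : Matrix n n R} (c : n → n → R)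
    (v : n → n → n → R) (hc : ∀ k, ∑ l, c k l = 1) (h : ∀ k, M k = ∑ l, c k l • v k l)
    (i j : n) :
    M.adjugate i j = ∑ φ : n → n, (∏ k, c k (φ k)) * (of fun k => v k (φ k)).adjugate i j := by
  simp_rw [adjugate_apply]
  -- `updateRow` is `Function.update`, so overwriting row `j` commutes with selecting rows by `φ`.
  refine det_eq_sum_of_row_eq_sum c (fun k l => Function.update (v · l) j (Pi.single i 1) k)
    (fun k => ?_)
  rcases eq_or_ne k j with rfl | hk
  · simp [updateRow_self, ← Finset.sum_smul, hc]
  · simp [hk, h]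

theorem one_sub_smul_row_eq_sum {P : Matrix n n R} (hP : ∀ k, ∑ l, P k l = 1) (α : R) (k : n) :
    (1 - α • P) k = ∑ l, P k l • ((1 : Matrix n n R) k - α • (1 : Matrix n n R) l) := by
  ext m
  simp [Finset.sum_apply, one_apply, mul_sub, Finset.sum_sub_distrib, hP, mul_comm]

theorem det_one_sub_smul_eq_sum {P : Matrix n n R} (hP : ∀ k, ∑ l, P k l = 1) (α : R) :
    (1 - α • P).det =
      ∑ φ : n → n, (∏ k, P k (φ k)) * (1 - α • (1 : Matrix n n R).submatrix φ id).det :=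
  det_eq_sum_of_row_eq_sum P _ (one_sub_smul_row_eq_sum hP α)

theorem adjugate_one_sub_smul_apply_eq_sum {P : Matrix n n R} (hP : ∀ k, ∑ l, P k l = 1) (α : R)
    (i j : n) :
    (1 - α • P).adjugate i j =
      ∑ φ : n → n, (∏ k, P k (φ k)) * (1 - α • (1 : Matrix n n R).submatrix φ id).adjugate i j :=
  adjugate_apply_eq_sum_of_row_eq_sum P _ hP (one_sub_smul_row_eq_sum hP α) i j

end RowExpansion

end Matrix

section SelectionPoly

open MvPolynomial

variable {n : Type*} [Fintype n] [DecidableEq n] {R : Type*} [CommSemiring R]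

noncomputable def selectionPoly (c : (n → n) → R) : MvPolynomial (n × n) R :=
  ∑ φ : n → n, (∏ k, X (k, φ k)) * C (c φ)

theorem totalDegree_selectionPoly_le (c : (n → n) → R) :
    (selectionPoly c).totalDegree ≤ Fintype.card n := by
  nontriviality R using Subsingleton.elim (selectionPoly c) 0, totalDegree_zero
  refine (totalDegree_finsetSum _ _).trans (Finset.sup_le fun φ _ => ?_)
  refine (totalDegree_mul _ _).trans ?_
  rw [totalDegree_C, add_zero]
  refine (totalDegree_finsetProd _ _).trans_eq ?_
  simp [totalDegree_X]

theorem coeff_selectionPoly_nonneg [PartialOrder R] [IsOrderedRing R] {c : (n → n) → R}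
    (hc : ∀ φ, 0 ≤ c φ) (m : n × n →₀ ℕ) : 0 ≤ (selectionPoly c).coeff m := by
  rw [selectionPoly, coeff_sum]
  refine Finset.sum_nonneg fun φ _ => ?_
  simp_rw [X, ← monomial_sum_one, mul_comm _ (C _), coeff_C_mul, coeff_monomial]
  split_ifs <;> simp [hc φ]

theorem eval_selectionPoly (c : (n → n) → R) (P : Matrix n n R) :
    eval (fun p => P p.1 p.2) (selectionPoly c) = ∑ φ : n → n, (∏ k, P k (φ k)) * c φ := by
  simp [selectionPoly]

end SelectionPoly

theorem stmt_1_general (n : ℕ) (i j : Fin n) (α : ℝ) (hα : α ∈ Set.Ioo (0:ℝ) 1) :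
    ∃ f g : MvPolynomial (Fin n × Fin n) ℝ,
      f.totalDegree ≤ n ∧ g.totalDegree ≤ n ∧
      (∀ m, 0 ≤ f.coeff m) ∧ (∀ m, 0 ≤ g.coeff m) ∧
      ∀ P : Matrix (Fin n) (Fin n) ℝ,
        (∀ k l, 0 ≤ P k l) → (∀ k, ∑ l, P k l = 1) →
        0 < MvPolynomial.eval (fun p => P p.1 p.2) g ∧
        (1 - α) * (1 - α • P)⁻¹ i j =
          MvPolynomial.eval (fun p => P p.1 p.2) f /
            MvPolynomial.eval (fun p => P p.1 p.2) g := by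
  obtain ⟨hα0, hα1⟩ := hα
  have hQ (φ : Fin n → Fin n) : (1 : Matrix (Fin n) (Fin n) ℝ).submatrix φ id ∈
      rowStochastic ℝ (Fin n) := submatrix_mem_rowStochastic (one_mem _) φ
  refine ⟨selectionPoly fun φ => (1 - α) * (1 - α • (1 : Matrix _ _ ℝ).submatrix φ id).adjugate i j,
    selectionPoly fun φ => (1 - α • (1 : Matrix _ _ ℝ).submatrix φ id).det,
    (totalDegree_selectionPoly_le _).trans_eq (Fintype.card_fin n),
    (totalDegree_selectionPoly_le _).trans_eq (Fintype.card_fin n),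
    coeff_selectionPoly_nonneg fun φ => mul_nonneg (sub_nonneg.2 hα1.le)
      (adjugate_one_sub_smul_nonneg_of_mem_rowStochastic (hQ φ) hα0.le hα1 i j),
    coeff_selectionPoly_nonneg fun φ =>
      (det_one_sub_smul_pos_of_mem_rowStochastic (hQ φ) hα0.le hα1).le,
    fun P hP0 hP1 => ?_⟩
  have hP : P ∈ rowStochastic ℝ (Fin n) := mem_rowStochastic_iff_sum.2 ⟨hP0, hP1⟩
  rw [eval_selectionPoly, eval_selectionPoly, ← det_one_sub_smul_eq_sum hP1]
  refine ⟨det_one_sub_smul_pos_of_mem_rowStochastic hP hα0.le hα1, ?_⟩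
  rw [inv_apply_eq_adjugate_apply_div, adjugate_one_sub_smul_apply_eq_sum hP1, mul_div_assoc',
    Finset.mul_sum]
  simp_rw [mul_left_comm (1 - α)]

theorem stmt_1 (n : ℕ) (hn : 1 ≤ n) (i j : Fin n) (α : ℝ) (hα : α ∈ Set.Ioo (0:ℝ) 1) :
    ∃ f g : MvPolynomial (Fin n × Fin n) ℝ,
      f.totalDegree ≤ n ∧ g.totalDegree ≤ n ∧
      (∀ m, 0 ≤ f.coeff m) ∧ (∀ m, 0 ≤ g.coeff m) ∧
      ∀ P : Matrix (Fin n) (Fin n) ℝ,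
        (∀ k l, 0 ≤ P k l) → (∀ k, ∑ l, P k l = 1) →
        0 < MvPolynomial.eval (fun p => P p.1 p.2) g ∧
        (1 - α) * (1 - α • P)⁻¹ i j =
          MvPolynomial.eval (fun p => P p.1 p.2) f /
            MvPolynomial.eval (fun p => P p.1 p.2) g :=
  stmt_1_general n i j α hα
end

section
/- Fix n ≥ 1, a state i ∈ {1,…,n}, a discount factor α ∈ (0,1), and a reward vector r ∈ ℝⁿ with nonnegative entries. There exist two polynomials f and g in the n² variables (x_{kℓ})_{1≤k,ℓ≤n}, each of total degree at most n and with nonnegative coefficients, such that for every n×n row-stochastic matrix P one has g(P) > 0 and (1−α)·(((I − α·P)⁻¹) *ᵥ r)_i = f(P)/g(P). -/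
/-!
Replacing each diagonal entry `1` of `1 - α • P` by the row sum `∑ l, P k l`, and in Cramer's
numerator each `r k` by `r k * ∑ l, P k l`, makes every row linear in the corresponding row of
`P`. By multilinearity of the determinant, both determinants are then homogeneous polynomials
`∑ τ, c τ * ∏ k, P k (τ k)` of degree `n`, where `c τ` is the same determinant evaluated at
the 0/1 stochastic matrix of `τ : Fin n → Fin n`. These coefficients are nonnegative because
`det (1 - α • P) > 0` for every stochastic `P` (strict diagonal dominance and continuity in `α`)
and `(1 - α • P)⁻¹` preserves nonnegativity (minimum principle).
-/

open Matrix

namespace Matrix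

variable {ι R : Type*} [Fintype ι] [DecidableEq ι]

section RowCombination

variable [CommRing R]

def rowCombination (w : ι → ι → ι → R) (Q : Matrix ι ι R) : Matrix ι ι R :=
  of fun k => ∑ l, Q k l • w k l

theorem rowCombination_one_submatrix (w : ι → ι → ι → R) (τ : ι → ι) :
    rowCombination w ((1 : Matrix ι ι R).submatrix τ id) = of fun k => w k (τ k) := by
  ext k j
  simp [rowCombination, one_apply]

theorem det_rowCombination (w : ι → ι → ι → R) (Q : Matrix ι ι R) :
    (rowCombination w Q).det = ∑ τ : ι → ι,
      (∏ k, Q k (τ k)) * (rowCombination w ((1 : Matrix ι ι R).submatrix τ id)).det := by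
  have := (detRowAlternating (n := ι) (R := R)).toMultilinearMap.map_sum fun k l => Q k l • w k l
  simp only [MultilinearMap.map_smul_univ, smul_eq_mul] at this
  simp only [rowCombination_one_submatrix]
  exact this

variable {Q : Matrix ι ι R}

theorem rowCombination_single_sub_smul_single (hQ : ∀ k, ∑ l, Q k l = 1) (α : R) :
    rowCombination (fun k l => Pi.single k 1 - α • Pi.single l 1) Q = 1 - α • Q := by
  ext k j
  by_cases h : k = j
  · subst h
    simp [rowCombination, Finset.sum_apply, Pi.single_apply, mul_sub, hQ, mul_comm]
  · simp [rowCombination, Finset.sum_apply, Pi.single_apply, h, Ne.symm h, mul_comm]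

theorem rowCombination_update (hQ : ∀ k, ∑ l, Q k l = 1) (w : ι → ι → ι → R) (i : ι)
    (r : ι → R) :
    rowCombination (fun k l => Function.update (w k l) i (r k)) Q =
      (rowCombination w Q).updateCol i r := by
  ext k j
  by_cases hj : j = i
  · subst hj
    simp [rowCombination, Finset.sum_apply, ← Finset.sum_mul, hQ]
  · simp [rowCombination, Finset.sum_apply, hj]

end RowCombination

theorem one_submatrix_mem_rowStochastic [Semiring R] [PartialOrder R] [IsOrderedRing R]
    (τ : ι → ι) : (1 : Matrix ι ι R).submatrix τ id ∈ rowStochastic R ι := by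
  refine mem_rowStochastic_iff_sum.2 ⟨fun k l => ?_, fun k => ?_⟩
  · simp only [submatrix_apply, id, one_apply]
    split_ifs <;> simp
  · simp [one_apply]

theorem det_updateCol_eq_det_mul_inv_mulVec [CommRing R] {A : Matrix ι ι R} (hA : IsUnit A.det)
    (i : ι) (b : ι → R) : (A.updateCol i b).det = A.det * (A⁻¹ *ᵥ b) i := by
  rw [← cramer_apply, ← det_smul_inv_mulVec_eq_cramer A b hA, Pi.smul_apply, smul_eq_mul]

section Stochastic

variable {P : Matrix ι ι ℝ} {t : ℝ}

theorem det_one_sub_smul_ne_zero (hP : P ∈ rowStochastic ℝ ι) (ht : |t| < 1) :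
    (1 - t • P).det ≠ 0 := by
  refine det_ne_zero_of_sum_row_lt_diag fun k => ?_
  have hoff : ∑ j ∈ Finset.univ.erase k, ‖(1 - t • P) k j‖ = |t| * (1 - P k k) := by
    rw [← sum_row_of_mem_rowStochastic hP k, ← Finset.sum_erase_eq_sub (Finset.mem_univ k),
      Finset.mul_sum]
    refine Finset.sum_congr rfl fun j hj => ?_
    simp [one_apply_ne (Finset.ne_of_mem_erase hj).symm,
      abs_of_nonneg (nonneg_of_mem_rowStochastic hP)]
  have hdiag : 1 - |t| * P k k ≤ ‖(1 - t • P) k k‖ := by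
    have := mul_le_mul_of_nonneg_right (le_abs_self t)
      (nonneg_of_mem_rowStochastic hP (i := k) (j := k))
    simp only [sub_apply, one_apply_eq, smul_apply, smul_eq_mul, Real.norm_eq_abs]
    linarith [le_abs_self (1 - t * P k k)]
  linarith

theorem det_one_sub_smul_pos (hP : P ∈ rowStochastic ℝ ι) (ht : |t| < 1) :
    0 < (1 - t • P).det := by
  have hcont : Continuous fun s : ℝ => (1 - s • P).det := by fun_prop
  by_contra! hle
  have hzero : (0 : ℝ) ∈ Set.uIcc (1 - t • P).det (1 - (0 : ℝ) • P).det :=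
    Set.mem_uIcc.2 (Or.inl ⟨hle, by simp⟩)
  obtain ⟨s, hs, hs0⟩ := intermediate_value_uIcc hcont.continuousOn hzero
  refine det_one_sub_smul_ne_zero hP ?_ hs0
  obtain ⟨ht₁, ht₂⟩ := abs_lt.1 ht
  rcases Set.mem_uIcc.1 hs with ⟨h₁, h₂⟩ | ⟨h₁, h₂⟩ <;>
    exact abs_lt.2 ⟨by linarith, by linarith⟩

theorem inv_one_sub_smul_mulVec_nonneg (hP : P ∈ rowStochastic ℝ ι) (ht₀ : 0 ≤ t)
    (ht₁ : t < 1) {r : ι → ℝ} (hr : 0 ≤ r) : 0 ≤ (1 - t • P)⁻¹ *ᵥ r := by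
  have hunit : IsUnit (1 - t • P).det :=
    (det_one_sub_smul_ne_zero hP (by rwa [abs_of_nonneg ht₀])).isUnit
  set v := (1 - t • P)⁻¹ *ᵥ r
  have hv : v - t • (P *ᵥ v) = r := by
    have : (1 - t • P) *ᵥ v = r := by
      rw [mulVec_mulVec, mul_nonsing_inv _ hunit, one_mulVec]
    simpa [sub_mulVec, smul_mulVec] using this
  intro k
  obtain ⟨k₀, -, hk₀⟩ := Finset.exists_min_image Finset.univ v ⟨k, Finset.mem_univ k⟩
  have hPv : v k₀ ≤ (P *ᵥ v) k₀ :=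
    calc v k₀ = ∑ l, P k₀ l * v k₀ := by
          rw [← Finset.sum_mul, sum_row_of_mem_rowStochastic hP, one_mul]
      _ ≤ ∑ l, P k₀ l * v l := Finset.sum_le_sum fun l _ =>
          mul_le_mul_of_nonneg_left (hk₀ l (Finset.mem_univ l)) (nonneg_of_mem_rowStochastic hP)
  have hrk₀ : v k₀ - t * (P *ᵥ v) k₀ = r k₀ := by simpa using congrFun hv k₀
  have hscaled : 0 ≤ (1 - t) * v k₀ := by
    have hr₀ : 0 ≤ r k₀ := hr k₀
    linarith [mul_le_mul_of_nonneg_left hPv ht₀]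
  exact (nonneg_of_mul_nonneg_right hscaled (by linarith)).trans (hk₀ k (Finset.mem_univ k))

theorem det_updateCol_one_sub_smul_nonneg (hP : P ∈ rowStochastic ℝ ι) (ht₀ : 0 ≤ t)
    (ht₁ : t < 1) {r : ι → ℝ} (hr : 0 ≤ r) (i : ι) :
    0 ≤ ((1 - t • P).updateCol i r).det := by
  have hdet := det_one_sub_smul_pos hP (by rwa [abs_of_nonneg ht₀])
  rw [det_updateCol_eq_det_mul_inv_mulVec hdet.ne'.isUnit]
  exact mul_nonneg hdet.le (inv_one_sub_smul_mulVec_nonneg hP ht₀ ht₁ hr i)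

end Stochastic

section Polynomial

open MvPolynomial

variable [CommRing R]

noncomputable def rowCombinationDetPoly (w : ι → ι → ι → R) : MvPolynomial (ι × ι) R :=
  ∑ τ : ι → ι,
    C (rowCombination w ((1 : Matrix ι ι R).submatrix τ id)).det * ∏ k, X (k, τ k)

theorem eval_rowCombinationDetPoly (w : ι → ι → ι → R) (Q : Matrix ι ι R) :
    eval (fun p => Q p.1 p.2) (rowCombinationDetPoly w) = (rowCombination w Q).det := by
  simp [rowCombinationDetPoly, det_rowCombination w Q, mul_comm]

theorem totalDegree_rowCombinationDetPoly_le (w : ι → ι → ι → R) :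
    (rowCombinationDetPoly w).totalDegree ≤ Fintype.card ι := by
  refine totalDegree_finsetSum_le fun τ _ => (totalDegree_mul _ _).trans ?_
  rw [totalDegree_C, zero_add]
  refine (totalDegree_finsetProd _ _).trans ?_
  have hX : ∀ k, (X (k, τ k) : MvPolynomial (ι × ι) R).totalDegree ≤ 1 := fun k =>
    (totalDegree_monomial_le (Finsupp.single (k, τ k) 1) (1 : R)).trans (by simp)
  simpa using Finset.sum_le_card_nsmul Finset.univ _ 1 fun k _ => hX k

theorem coeff_rowCombinationDetPoly_nonneg [PartialOrder R] [IsOrderedRing R]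
    {w : ι → ι → ι → R}
    (hw : ∀ τ : ι → ι, 0 ≤ (rowCombination w ((1 : Matrix ι ι R).submatrix τ id)).det)
    (m : ι × ι →₀ ℕ) : 0 ≤ (rowCombinationDetPoly w).coeff m := by
  simp only [rowCombinationDetPoly, coeff_sum, coeff_C_mul, X, ← monomial_sum_one, coeff_monomial]
  exact Finset.sum_nonneg fun τ _ => mul_nonneg (hw τ) (by split_ifs <;> simp)

end Polynomial

end Matrix

theorem stmt_2_general (n : ℕ) (i : Fin n) (α : ℝ) (hα : α ∈ Set.Ioo (0:ℝ) 1)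
    (r : Fin n → ℝ) (hr : ∀ k, 0 ≤ r k) :
    ∃ f g : MvPolynomial (Fin n × Fin n) ℝ,
      f.totalDegree ≤ n ∧ g.totalDegree ≤ n ∧
      (∀ m, 0 ≤ f.coeff m) ∧ (∀ m, 0 ≤ g.coeff m) ∧
      ∀ P : Matrix (Fin n) (Fin n) ℝ,
        (∀ k l, 0 ≤ P k l) → (∀ k, ∑ l, P k l = 1) →
        0 < MvPolynomial.eval (fun p => P p.1 p.2) g ∧
        (1 - α) * ((1 - α • P)⁻¹ *ᵥ r) i =
          MvPolynomial.eval (fun p => P p.1 p.2) f /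
            MvPolynomial.eval (fun p => P p.1 p.2) g := by
  obtain ⟨hα₀, hα₁⟩ := hα
  have hαabs : |α| < 1 := by rwa [abs_of_pos hα₀]
  set wg : Fin n → Fin n → Fin n → ℝ := fun k l => Pi.single k 1 - α • Pi.single l 1
  set wf : Fin n → Fin n → Fin n → ℝ := fun k l => Function.update (wg k l) i (r k)
  have hg : ∀ P ∈ rowStochastic ℝ (Fin n), rowCombination wg P = 1 - α • P := fun P hP =>
    rowCombination_single_sub_smul_single (sum_row_of_mem_rowStochastic hP) α
  have hf : ∀ P ∈ rowStochastic ℝ (Fin n),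
      rowCombination wf P = (1 - α • P).updateCol i r := fun P hP => by
    rw [rowCombination_update (sum_row_of_mem_rowStochastic hP), hg P hP]
  have hτ := one_submatrix_mem_rowStochastic (R := ℝ) (ι := Fin n)
  refine ⟨(1 - α) • rowCombinationDetPoly wf, rowCombinationDetPoly wg, ?_, ?_, fun m => ?_,
    coeff_rowCombinationDetPoly_nonneg fun τ => ?_, fun P hP₀ hP₁ => ?_⟩
  · exact (MvPolynomial.totalDegree_smul_le _ _).trans
      ((totalDegree_rowCombinationDetPoly_le wf).trans_eq (Fintype.card_fin n))
  · exact (totalDegree_rowCombinationDetPoly_le wg).trans_eq (Fintype.card_fin n)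
  · rw [MvPolynomial.coeff_smul, smul_eq_mul]
    refine mul_nonneg (by linarith) (coeff_rowCombinationDetPoly_nonneg (fun τ => ?_) m)
    rw [hf _ (hτ τ)]
    exact det_updateCol_one_sub_smul_nonneg (hτ τ) hα₀.le hα₁ hr i
  · rw [hg _ (hτ τ)]
    exact (det_one_sub_smul_pos (hτ τ) hαabs).le
  · have hP : P ∈ rowStochastic ℝ (Fin n) := mem_rowStochastic_iff_sum.2 ⟨hP₀, hP₁⟩
    have hdet := det_one_sub_smul_pos hP hαabs
    rw [MvPolynomial.smul_eval, eval_rowCombinationDetPoly, eval_rowCombinationDetPoly,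
      hf P hP, hg P hP, det_updateCol_eq_det_mul_inv_mulVec hdet.ne'.isUnit]
    exact ⟨hdet, by field_simp⟩

theorem stmt_2 (n : ℕ) (hn : 1 ≤ n) (i : Fin n) (α : ℝ) (hα : α ∈ Set.Ioo (0:ℝ) 1)
    (r : Fin n → ℝ) (hr : ∀ k, 0 ≤ r k) :
    ∃ f g : MvPolynomial (Fin n × Fin n) ℝ,
      f.totalDegree ≤ n ∧ g.totalDegree ≤ n ∧
      (∀ m, 0 ≤ f.coeff m) ∧ (∀ m, 0 ≤ g.coeff m) ∧
      ∀ P : Matrix (Fin n) (Fin n) ℝ,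
        (∀ k l, 0 ≤ P k l) → (∀ k, ∑ l, P k l = 1) →
        0 < MvPolynomial.eval (fun p => P p.1 p.2) g ∧
        (1 - α) * ((1 - α • P)⁻¹ *ᵥ r) i =
          MvPolynomial.eval (fun p => P p.1 p.2) f /
            MvPolynomial.eval (fun p => P p.1 p.2) g :=
  stmt_2_general n i α hα r hr
end

section
/- Let α, ε ∈ (0,1), let P₁, P₂ be n×n row-stochastic matrices and r₁, r₂ ∈ ℝⁿ reward vectors, and let i ∈ {1,…,n}. Assume: (A1) P₁ and P₂ have the same support, i.e. for all k, ℓ, (P₁)_{kℓ} > 0 ↔ (P₂)_{kℓ} > 0; (A2) for all k, ℓ with (P₁)_{kℓ} > 0 and (P₂)_{kℓ} > 0, max((P₁)_{kℓ}/(P₂)_{kℓ}, (P₂)_{kℓ}/(P₁)_{kℓ}) − 1 ≤ ε/(8n); (A3) for all k, |(r₁)_k − (r₂)_k| ≤ ε/2. Then, writing v₁ = (I − α·P₁)⁻¹ *ᵥ r₁ and v₂ = (I − α·P₂)⁻¹ *ᵥ r₂, one has (1−α)·|(v₁)_i − (v₂)_i| ≤ ε/2 + (ε/2)·(max_k |(r₁)_k|).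 -/
/-!
The resolvent `(1 - α • P)⁻¹` of a substochastic matrix `P` is entrywise nonnegative (a discrete
maximum principle), and for stochastic `P` its rows sum to `(1 - α)⁻¹`. If two stochastic matrices
differ only in row `k`, and there by a factor at most `c`, their resolvents differ entrywise by a
factor at most `c ^ 2`: both decompose as `A i j = W i j + α * A i k * (P k ᵥ* W) j` with the same
`W` (the resolvent with row `k` deleted), and equating row sums bounds the ratio of the two
values of `A i k` by `c`. Exchanging the `n` rows of `P₁` for those of `P₂` one at a time gives a
factor `(1 + ε / (8n)) ^ (2n) ≤ 1 + ε / 2`, so the resolvents satisfy `|A₁ - A₂| ≤ (ε / 2) A₁`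
entrywise, and with (A3) and the row sums this yields the bound.
-/

open Matrix Finset

section Resolvent

variable {ι : Type*} [DecidableEq ι] {α : ℝ} {M : Matrix ι ι ℝ}

theorem sub_updateRow_zero (k : ι) :
    M - M.updateRow k 0 = vecMulVec (Pi.single k 1) (M k) := by
  ext l m
  by_cases h : l = k
  · subst h; simp [vecMulVec_apply]
  · simp [vecMulVec_apply, h]

theorem updateRow_zero_nonneg (hM : ∀ i j, 0 ≤ M i j) (k : ι) (i j : ι) :
    0 ≤ M.updateRow k 0 i j := by
  by_cases h : i = k
  · subst h; simp
  · simp [updateRow_ne h, hM i j]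

variable [Fintype ι]

theorem sum_updateRow_zero_le (hMrow : ∀ i, ∑ j, M i j ≤ 1) (k : ι) (i : ι) :
    ∑ j, M.updateRow k 0 i j ≤ 1 := by
  by_cases h : i = k
  · subst h; simp
  · simp [updateRow_ne h, hMrow i]

theorem one_sub_smul_mulVec_apply (x : ι → ℝ) (i : ι) :
    ((1 - α • M) *ᵥ x) i = x i - α * ∑ j, M i j * x j := by
  rw [sub_mulVec, one_mulVec, smul_mulVec]
  simp [mulVec, dotProduct]

theorem nonneg_of_nonneg_one_sub_smul_mulVec (hα0 : 0 ≤ α) (hα1 : α < 1)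
    (hM : ∀ i j, 0 ≤ M i j) (hMrow : ∀ i, ∑ j, M i j ≤ 1) {x : ι → ℝ}
    (hx : 0 ≤ (1 - α • M) *ᵥ x) : 0 ≤ x := by
  intro i
  by_contra! hneg
  have : Nonempty ι := ⟨i⟩
  obtain ⟨m, hm⟩ := Finite.exists_min x
  have hxm : x m < 0 := (hm i).trans_lt hneg
  have hmean : x m ≤ ∑ j, M m j * x j :=
    calc x m ≤ (∑ j, M m j) * x m := by nlinarith [hMrow m]
      _ ≤ ∑ j, M m j * x j := by
        rw [sum_mul]; exact sum_le_sum fun j _ => mul_le_mul_of_nonneg_left (hm j) (hM m j)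
  have hxm' := hx m
  rw [Pi.zero_apply, one_sub_smul_mulVec_apply] at hxm'
  nlinarith

theorem isUnit_one_sub_smul (hα0 : 0 ≤ α) (hα1 : α < 1)
    (hM : ∀ i j, 0 ≤ M i j) (hMrow : ∀ i, ∑ j, M i j ≤ 1) : IsUnit (1 - α • M) := by
  refine mulVec_injective_iff_isUnit.mp fun x y hxy => ?_
  have hle : ∀ u v : ι → ℝ, (1 - α • M) *ᵥ u = (1 - α • M) *ᵥ v → u ≤ v := fun u v h =>
    sub_nonneg.mp <| nonneg_of_nonneg_one_sub_smul_mulVec hα0 hα1 hM hMrow <| by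
      rw [mulVec_sub, h, sub_self]
  exact le_antisymm (hle x y hxy) (hle y x hxy.symm)

theorem one_sub_smul_inv_nonneg (hα0 : 0 ≤ α) (hα1 : α < 1)
    (hM : ∀ i j, 0 ≤ M i j) (hMrow : ∀ i, ∑ j, M i j ≤ 1) (i j : ι) :
    0 ≤ (1 - α • M)⁻¹ i j := by
  have hinv := mul_nonsing_inv _ ((isUnit_one_sub_smul hα0 hα1 hM hMrow).map detMonoidHom)
  have hcol : (1 - α • M) *ᵥ ((1 - α • M)⁻¹ *ᵥ Pi.single j 1) = Pi.single j 1 := by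
    rw [mulVec_mulVec, hinv, one_mulVec]
  have := nonneg_of_nonneg_one_sub_smul_mulVec hα0 hα1 hM hMrow
    (hcol ▸ Pi.single_nonneg.mpr zero_le_one) i
  simpa [mulVec_single_one] using this

theorem sum_one_sub_smul_inv_apply (hα0 : 0 ≤ α) (hα1 : α < 1) (hM : M ∈ rowStochastic ℝ ι)
    (i : ι) : ∑ j, (1 - α • M)⁻¹ i j = (1 - α)⁻¹ := by
  have hunit := isUnit_one_sub_smul hα0 hα1 hM.1 fun i => (sum_row_of_mem_rowStochastic hM i).le
  have hone : (1 - α • M) *ᵥ 1 = (1 - α) • 1 := by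
    rw [sub_mulVec, one_mulVec, smul_mulVec, one_vecMul_of_mem_rowStochastic hM, sub_smul,
      one_smul]
  have : (1 - α) • ((1 - α • M)⁻¹ *ᵥ 1) = 1 := by
    rw [← mulVec_smul, ← hone, mulVec_mulVec, nonsing_inv_mul _ (hunit.map detMonoidHom),
      one_mulVec]
  have hi := congrFun this i
  simp only [Pi.smul_apply, smul_eq_mul, Pi.one_apply, mulVec, dotProduct, mul_one] at hi
  exact eq_inv_of_mul_eq_one_right hi

/-- Last-exit decomposition: a path from `i` to `j` is split at its last step out of `k`. -/
theorem one_sub_smul_inv_apply_eq_updateRow (hα0 : 0 ≤ α) (hα1 : α < 1)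
    (hM : ∀ i j, 0 ≤ M i j) (hMrow : ∀ i, ∑ j, M i j ≤ 1) (k i j : ι) :
    (1 - α • M)⁻¹ i j = (1 - α • M.updateRow k 0)⁻¹ i j +
      α * (1 - α • M)⁻¹ i k * (M k ᵥ* (1 - α • M.updateRow k 0)⁻¹) j := by
  have hunit := isUnit_one_sub_smul hα0 hα1 hM hMrow
  have hunit' := isUnit_one_sub_smul hα0 hα1 (updateRow_zero_nonneg hM k)
    (sum_updateRow_zero_le hMrow k)
  have hres := Ring.inverse_sub_inverse (iff_of_true hunit hunit')
  rw [← nonsing_inv_eq_ringInverse, ← nonsing_inv_eq_ringInverse, sub_sub_sub_cancel_left,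
    ← smul_sub, sub_updateRow_zero, Matrix.mul_smul, Matrix.smul_mul, mul_vecMulVec,
    vecMulVec_mul, mulVec_single_one] at hres
  rw [← sub_eq_iff_eq_add', ← Matrix.sub_apply, hres]
  simp [vecMulVec_apply, mul_assoc]

end Resolvent

section RowComparison

variable {ι : Type*} [Fintype ι]

theorem mul_le_sq_mul_of_mul_sum_eq {g₁ g₂ : ι → ℝ} {t₁ t₂ c : ℝ} (hc : 0 ≤ c) (ht₁ : 0 ≤ t₁)
    (hg₁ : ∀ j, 0 ≤ g₁ j) (hg₂ : ∀ j, 0 ≤ g₂ j) (h12 : ∀ j, g₁ j ≤ c * g₂ j)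
    (h21 : ∀ j, g₂ j ≤ c * g₁ j) (ht : t₁ * ∑ j, g₁ j = t₂ * ∑ j, g₂ j) (j : ι) :
    t₂ * g₂ j ≤ c ^ 2 * (t₁ * g₁ j) := by
  rcases (sum_nonneg fun j _ => hg₂ j).eq_or_lt with hG | hG
  · rw [(sum_eq_zero_iff_of_nonneg fun j _ => hg₂ j).mp hG.symm j (mem_univ j), mul_zero]
    exact mul_nonneg (sq_nonneg c) (mul_nonneg ht₁ (hg₁ j))
  · have ht₂ : t₂ ≤ c * t₁ := by
      refine le_of_mul_le_mul_right ?_ hG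
      calc t₂ * ∑ j, g₂ j = t₁ * ∑ j, g₁ j := ht.symm
        _ ≤ t₁ * ∑ j, c * g₂ j := mul_le_mul_of_nonneg_left (sum_le_sum fun j _ => h12 j) ht₁
        _ = c * t₁ * ∑ j, g₂ j := by rw [← mul_sum]; ring
    calc t₂ * g₂ j ≤ (c * t₁) * (c * g₁ j) :=
          mul_le_mul ht₂ (h21 j) (hg₂ j) (mul_nonneg hc ht₁)
      _ = c ^ 2 * (t₁ * g₁ j) := by ring

theorem vecMul_apply_le_mul {u v : ι → ℝ} {W : Matrix ι ι ℝ} {c : ℝ} (hW : ∀ a b, 0 ≤ W a b)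
    (h : ∀ l, u l ≤ c * v l) (j : ι) : (u ᵥ* W) j ≤ c * (v ᵥ* W) j := by
  simp only [vecMul, dotProduct, mul_sum]
  exact sum_le_sum fun l _ => by
    rw [← mul_assoc]; exact mul_le_mul_of_nonneg_right (h l) (hW l j)

variable [DecidableEq ι] {α : ℝ}

theorem one_sub_smul_inv_apply_le_sq_mul_of_row_update (hα0 : 0 ≤ α) (hα1 : α < 1)
    {P₁ P₂ : Matrix ι ι ℝ} (hP₁ : P₁ ∈ rowStochastic ℝ ι) (hP₂ : P₂ ∈ rowStochastic ℝ ι) {k : ι}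
    (hoff : ∀ a, a ≠ k → P₁ a = P₂ a) {c : ℝ} (hc : 1 ≤ c) (h12 : ∀ l, P₁ k l ≤ c * P₂ k l)
    (h21 : ∀ l, P₂ k l ≤ c * P₁ k l) (i j : ι) :
    (1 - α • P₂)⁻¹ i j ≤ c ^ 2 * (1 - α • P₁)⁻¹ i j := by
  have hrow : ∀ {P : Matrix ι ι ℝ}, P ∈ rowStochastic ℝ ι → ∀ a, ∑ b, P a b ≤ 1 :=
    fun hP a => (sum_row_of_mem_rowStochastic hP a).le
  have hQ : P₂.updateRow k 0 = P₁.updateRow k 0 := by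
    ext a b
    by_cases h : a = k
    · simp [h]
    · simp [updateRow_ne h, hoff a h]
  set W := (1 - α • P₁.updateRow k 0)⁻¹
  have hW : ∀ a b, 0 ≤ W a b := one_sub_smul_inv_nonneg hα0 hα1
    (updateRow_zero_nonneg hP₁.1 k) (sum_updateRow_zero_le (hrow hP₁) k)
  have hg : ∀ {P : Matrix ι ι ℝ}, P ∈ rowStochastic ℝ ι → ∀ j, 0 ≤ (P k ᵥ* W) j :=
    fun hP j => sum_nonneg fun l _ => mul_nonneg (hP.1 k l) (hW l j)
  have rep₁ := one_sub_smul_inv_apply_eq_updateRow hα0 hα1 hP₁.1 (hrow hP₁) k i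
  have rep₂ := one_sub_smul_inv_apply_eq_updateRow hα0 hα1 hP₂.1 (hrow hP₂) k i
  rw [hQ] at rep₂
  have hmass : α * (1 - α • P₁)⁻¹ i k * ∑ j, (P₁ k ᵥ* W) j =
      α * (1 - α • P₂)⁻¹ i k * ∑ j, (P₂ k ᵥ* W) j := by
    have h₁ := sum_one_sub_smul_inv_apply hα0 hα1 hP₁ i
    have h₂ := sum_one_sub_smul_inv_apply hα0 hα1 hP₂ i
    rw [sum_congr rfl fun j _ => rep₁ j, sum_add_distrib, ← mul_sum] at h₁
    rw [sum_congr rfl fun j _ => rep₂ j, sum_add_distrib, ← mul_sum] at h₂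
    linarith
  have hpaths := mul_le_sq_mul_of_mul_sum_eq (zero_le_one.trans hc)
    (mul_nonneg hα0 (one_sub_smul_inv_nonneg hα0 hα1 hP₁.1 (hrow hP₁) i k)) (hg hP₁) (hg hP₂)
    (vecMul_apply_le_mul hW h12) (vecMul_apply_le_mul hW h21) hmass j
  have hWij : W i j ≤ c ^ 2 * W i j := le_mul_of_one_le_left (hW i j) (one_le_pow₀ hc)
  rw [rep₁ j, rep₂ j, mul_add]
  exact add_le_add hWij hpaths

end RowComparison

section Chain

variable {ι : Type*} [Fintype ι] [DecidableEq ι] {α : ℝ}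

theorem updateRow_mem_rowStochastic {P Q : Matrix ι ι ℝ} (hP : P ∈ rowStochastic ℝ ι)
    (hQ : Q ∈ rowStochastic ℝ ι) (k : ι) : P.updateRow k (Q k) ∈ rowStochastic ℝ ι := by
  rw [mem_rowStochastic_iff_sum]
  constructor
  · intro a b
    by_cases h : a = k
    · subst h; simpa using hQ.1 a b
    · simpa [updateRow_ne h] using hP.1 a b
  · intro a
    by_cases h : a = k
    · subst h; simpa using sum_row_of_mem_rowStochastic hQ a
    · simpa [updateRow_ne h] using sum_row_of_mem_rowStochastic hP a

theorem one_sub_smul_inv_apply_le_pow_card_mul (hα0 : 0 ≤ α) (hα1 : α < 1)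
    {P₁ P₂ : Matrix ι ι ℝ} (hP₁ : P₁ ∈ rowStochastic ℝ ι) (hP₂ : P₂ ∈ rowStochastic ℝ ι)
    {c : ℝ} (hc : 1 ≤ c) (hcmp : ∀ k l, P₁ k l ≤ c * P₂ k l ∧ P₂ k l ≤ c * P₁ k l) (i j : ι) :
    (1 - α • P₂)⁻¹ i j ≤ c ^ (2 * Fintype.card ι) * (1 - α • P₁)⁻¹ i j := by
  suffices h : ∀ S : Finset ι, ∀ P ∈ rowStochastic ℝ ι, (∀ a ∉ S, P a = P₁ a) →
      (∀ k l, P₁ k l ≤ c * P k l ∧ P k l ≤ c * P₁ k l) →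
      ∀ i j, (1 - α • P)⁻¹ i j ≤ c ^ (2 * #S) * (1 - α • P₁)⁻¹ i j from
    h univ P₂ hP₂ (by simp) hcmp i j
  intro S
  induction S using Finset.induction_on with
  | empty =>
    intro P _ hP _ i j
    rw [show P = P₁ from funext fun a => hP a (notMem_empty a)]
    simp
  | insert k S hk ih =>
    intro P hP hPS hPcmp i j
    have hP' := updateRow_mem_rowStochastic hP hP₁ k
    have hP'S : ∀ a ∉ S, P.updateRow k (P₁ k) a = P₁ a := by
      intro a ha
      by_cases h : a = k
      · simp [h]
      · rw [updateRow_ne h]; exact hPS a (by simp [h, ha])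
    have hP'cmp : ∀ k' l, P₁ k' l ≤ c * P.updateRow k (P₁ k) k' l ∧
        P.updateRow k (P₁ k) k' l ≤ c * P₁ k' l := by
      intro k' l
      by_cases h : k' = k
      · subst h
        simpa using le_mul_of_one_le_left (hP₁.1 k' l) hc
      · simpa [updateRow_ne h] using hPcmp k' l
    calc (1 - α • P)⁻¹ i j ≤ c ^ 2 * (1 - α • P.updateRow k (P₁ k))⁻¹ i j :=
          one_sub_smul_inv_apply_le_sq_mul_of_row_update hα0 hα1 hP' hP
            (fun a ha => updateRow_ne ha) hc (fun l => by simpa using (hPcmp k l).1)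
            (fun l => by simpa using (hPcmp k l).2) i j
      _ ≤ c ^ 2 * (c ^ (2 * #S) * (1 - α • P₁)⁻¹ i j) :=
          mul_le_mul_of_nonneg_left (ih _ hP' hP'S hP'cmp i j) (by positivity)
      _ = c ^ (2 * #(insert k S)) * (1 - α • P₁)⁻¹ i j := by
          rw [card_insert_of_notMem hk]; ring

end Chain

theorem le_one_add_mul_of_max_div_sub_one_le {p q δ : ℝ} (hp : 0 ≤ p) (hq : 0 ≤ q)
    (hpq : 0 < p ↔ 0 < q) (h : 0 < p → 0 < q → max (p / q) (q / p) - 1 ≤ δ) :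
    p ≤ (1 + δ) * q ∧ q ≤ (1 + δ) * p := by
  rcases hp.eq_or_lt with rfl | hp
  · obtain rfl : q = 0 := le_antisymm (not_lt.mp (mt hpq.mpr (lt_irrefl 0))) hq
    simp
  · have hq := hpq.mp hp
    obtain ⟨hpq', hqp'⟩ := max_le_iff.mp (sub_le_iff_le_add'.mp (h hp hq))
    exact ⟨(div_le_iff₀ hq).mp hpq', (div_le_iff₀ hp).mp hqp'⟩

theorem abs_sub_le_sub_one_mul {a b C : ℝ} (hC : 1 ≤ C) (hab : a ≤ C * b)
    (hba : b ≤ C * a) : |a - b| ≤ (C - 1) * a := by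
  rw [abs_sub_le_iff]
  constructor
  · nlinarith
  · linarith

theorem one_add_div_pow_sub_one_le {ε : ℝ} (hε0 : 0 ≤ ε) (hε1 : ε ≤ 1) (n : ℕ) :
    (1 + ε / (8 * n)) ^ (2 * n) - 1 ≤ ε / 2 := by
  rcases n.eq_zero_or_pos with rfl | hn
  · simpa using div_nonneg hε0 zero_le_two
  have hpow : (1 + ε / (8 * n)) ^ (2 * n) ≤ Real.exp (ε / 4) := by
    have h := Real.one_sub_div_pow_le_exp_neg (n := 2 * n) (t := -(ε / 4))
      (by push_cast; linarith [(Nat.cast_nonneg n : (0 : ℝ) ≤ n)])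
    convert h using 2
    · push_cast; field_simp; ring
    · ring
  have hexp : Real.exp (ε / 4) ≤ 1 + ε / 2 := by
    calc Real.exp (ε / 4) ≤ 1 / (1 - ε / 4) :=
          Real.exp_bound_div_one_sub_of_interval (by positivity) (by linarith)
      _ ≤ 1 + ε / 2 := by rw [div_le_iff₀ (by linarith)]; nlinarith
  linarith

section ValueBound

variable {ι : Type*} [Fintype ι]

theorem abs_dotProduct_sub_dotProduct_le {a₁ a₂ r₁ r₂ : ι → ℝ} {δ η R s : ℝ}
    (ha₂ : ∀ j, 0 ≤ a₂ j) (ha : ∀ j, |a₁ j - a₂ j| ≤ δ * a₁ j) (hr : ∀ j, |r₁ j - r₂ j| ≤ η)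
    (hR : ∀ j, |r₁ j| ≤ R) (hs₁ : ∑ j, a₁ j = s) (hs₂ : ∑ j, a₂ j = s) :
    |a₁ ⬝ᵥ r₁ - a₂ ⬝ᵥ r₂| ≤ s * (δ * R + η) := by
  have hsplit : a₁ ⬝ᵥ r₁ - a₂ ⬝ᵥ r₂ = (a₁ - a₂) ⬝ᵥ r₁ + a₂ ⬝ᵥ (r₁ - r₂) := by
    rw [sub_dotProduct, dotProduct_sub]; ring
  have h₁ : |(a₁ - a₂) ⬝ᵥ r₁| ≤ ∑ j, δ * R * a₁ j :=
    (abs_sum_le_sum_abs _ _).trans <| sum_le_sum fun j _ => by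
      rw [Pi.sub_apply, abs_mul, mul_right_comm]
      exact mul_le_mul (ha j) (hR j) (abs_nonneg _) ((abs_nonneg _).trans (ha j))
  have h₂ : |a₂ ⬝ᵥ (r₁ - r₂)| ≤ ∑ j, η * a₂ j :=
    (abs_sum_le_sum_abs _ _).trans <| sum_le_sum fun j _ => by
      rw [Pi.sub_apply, abs_mul, abs_of_nonneg (ha₂ j), mul_comm]
      exact mul_le_mul_of_nonneg_right (hr j) (ha₂ j)
  rw [← mul_sum, hs₁] at h₁
  rw [← mul_sum, hs₂] at h₂
  rw [hsplit]
  linarith [abs_add_le ((a₁ - a₂) ⬝ᵥ r₁) (a₂ ⬝ᵥ (r₁ - r₂))]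

end ValueBound

theorem stmt_3 (n : ℕ) (α ε : ℝ) (hα : α ∈ Set.Ioo (0:ℝ) 1) (hε : ε ∈ Set.Ioo (0:ℝ) 1)
    (P₁ P₂ : Matrix (Fin n) (Fin n) ℝ)
    (hP₁ : ∀ k l, 0 ≤ P₁ k l) (hP₁row : ∀ k, ∑ l, P₁ k l = 1)
    (hP₂ : ∀ k l, 0 ≤ P₂ k l) (hP₂row : ∀ k, ∑ l, P₂ k l = 1)
    (r₁ r₂ : Fin n → ℝ) (i : Fin n)
    (hA1 : ∀ k l, 0 < P₁ k l ↔ 0 < P₂ k l)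
    (hA2 : ∀ k l, 0 < P₁ k l → 0 < P₂ k l →
      max (P₁ k l / P₂ k l) (P₂ k l / P₁ k l) - 1 ≤ ε / (8 * n))
    (hA3 : ∀ k, |r₁ k - r₂ k| ≤ ε / 2) :
    (1 - α) * |((1 - α • P₁)⁻¹ *ᵥ r₁) i - ((1 - α • P₂)⁻¹ *ᵥ r₂) i| ≤
      ε / 2 + ε / 2 *
        Finset.univ.sup' ⟨i, Finset.mem_univ i⟩ (fun k => |r₁ k|) := by
  obtain ⟨hα0, hα1⟩ := hα
  have hS₁ : P₁ ∈ rowStochastic ℝ (Fin n) := mem_rowStochastic_iff_sum.mpr ⟨hP₁, hP₁row⟩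
  have hS₂ : P₂ ∈ rowStochastic ℝ (Fin n) := mem_rowStochastic_iff_sum.mpr ⟨hP₂, hP₂row⟩
  have hc : 1 ≤ 1 + ε / (8 * n) := le_add_of_nonneg_right (by positivity [hε.1.le])
  have hcmp k l := le_one_add_mul_of_max_div_sub_one_le (hP₁ k l) (hP₂ k l) (hA1 k l) (hA2 k l)
  have hnonneg {P : Matrix (Fin n) (Fin n) ℝ} (hP : P ∈ rowStochastic ℝ (Fin n)) :=
    one_sub_smul_inv_nonneg hα0.le hα1 hP.1 fun k => (sum_row_of_mem_rowStochastic hP k).le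
  have hA j : |(1 - α • P₁)⁻¹ i j - (1 - α • P₂)⁻¹ i j| ≤
      ((1 + ε / (8 * n)) ^ (2 * n) - 1) * (1 - α • P₁)⁻¹ i j := by
    have h₁₂ := one_sub_smul_inv_apply_le_pow_card_mul hα0.le hα1 hS₂ hS₁ hc
      (fun k l => (hcmp k l).symm) i j
    have h₂₁ := one_sub_smul_inv_apply_le_pow_card_mul hα0.le hα1 hS₁ hS₂ hc hcmp i j
    rw [Fintype.card_fin] at h₁₂ h₂₁
    exact abs_sub_le_sub_one_mul (one_le_pow₀ hc) h₁₂ h₂₁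
  set R := Finset.univ.sup' ⟨i, Finset.mem_univ i⟩ (fun k => |r₁ k|)
  have hR k : |r₁ k| ≤ R := le_sup' (fun k => |r₁ k|) (mem_univ k)
  have hval := abs_dotProduct_sub_dotProduct_le (hnonneg hS₂ i) hA hA3 hR
    (sum_one_sub_smul_inv_apply hα0.le hα1 hS₁ i) (sum_one_sub_smul_inv_apply hα0.le hα1 hS₂ i)
  have hδ := one_add_div_pow_sub_one_le hε.1.le hε.2.le n
  calc (1 - α) * |((1 - α • P₁)⁻¹ *ᵥ r₁) i - ((1 - α • P₂)⁻¹ *ᵥ r₂) i|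
      ≤ (1 - α) * ((1 - α)⁻¹ * (((1 + ε / (8 * n)) ^ (2 * n) - 1) * R + ε / 2)) :=
        mul_le_mul_of_nonneg_left hval (sub_nonneg.mpr hα1.le)
    _ = ((1 + ε / (8 * n)) ^ (2 * n) - 1) * R + ε / 2 :=
        mul_inv_cancel_left₀ (sub_ne_zero.mpr hα1.ne') _
    _ ≤ ε / 2 + ε / 2 * R := by
        nlinarith [mul_le_mul_of_nonneg_right hδ ((abs_nonneg (r₁ i)).trans (hR i))]
end

section
/- Let ε ∈ (0,1), let P₁, P₂ be n×n row-stochastic matrices and r₁, r₂ ∈ ℝⁿ reward vectors, and let i ∈ {1,…,n}. Assume: (A1) for all k, ℓ, (P₁)_{kℓ} > 0 ↔ (P₂)_{kℓ} > 0; (A2) for all k, ℓ with (P₁)_{kℓ} > 0 and (P₂)_{kℓ} > 0, max((P₁)_{kℓ}/(P₂)_{kℓ}, (P₂)_{kℓ}/(P₁)_{kℓ}) − 1 ≤ ε/(8n); (A3) for all k, |(r₁)_k − (r₂)_k| ≤ ε/2. Let φ₁, φ₂ ∈ ℝ be such that (1−α)·(((I − α·P₁)⁻¹) *ᵥ r₁)_i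 → φ₁ and (1−α)·(((I − α·P₂)⁻¹) *ᵥ r₂)_i → φ₂ as α → 1 from the left. Then |φ₁ − φ₂| ≤ ε/2 + (ε/2)·(max_k |(r₁)_k|). -/
/-!
For `α < 1` the row `w(P) := (1 - α) • (1 - α • P)⁻¹ i` is a probability vector and the
normalised discounted value is `∑ l, w(P) l * r l`. Each entry of `(1 - α • P)⁻¹` is a cofactor
divided by the determinant. Writing row `k` of `1 - α • P` as
`(1 - α) e_k + ∑ m, α P k m (e_k - e_m)` and expanding multilinearly, the determinant and every
cofactor become sums, over partial maps `g`, of products of one nonnegative weight per row with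
the determinant or a cofactor of `1 - N_g`, `N_g` the 0/1 matrix of `g`. These are nonnegative,
as limits of the positive values for strictly substochastic matrices. So `P₁ ≤ (1 + δ) P₂`
entrywise moves determinant and cofactors by a factor at most `(1 + δ) ^ n`, whence
`w(P₁) ≤ (1 + δ) ^ (2 n) w(P₂)` and symmetrically, uniformly in `α`. For `δ = ε / (8 n)` that
factor is at most `1 + ε / 2`, which bounds the difference of the two averages; then let `α → 1`.
-/

open Matrix Filter

namespace Matrix

section

variable {ι : Type*} [Fintype ι]

theorem sum_smul_apply (t : ℝ) (Q : Matrix ι ι ℝ) (k : ι) :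
    ∑ l, (t • Q) k l = t * ∑ l, Q k l := by
  simp only [smul_apply, smul_eq_mul, Finset.mul_sum]

variable [DecidableEq ι]

theorem nonneg_of_one_sub_mulVec_nonneg {Q : Matrix ι ι ℝ} (hQ : ∀ k l, 0 ≤ Q k l)
    (hrow : ∀ k, ∑ l, Q k l < 1) {v : ι → ℝ} (hv : ∀ k, 0 ≤ ((1 - Q) *ᵥ v) k) (k : ι) :
    0 ≤ v k := by
  by_contra! hk
  obtain ⟨j, -, hj⟩ := Finset.exists_min_image Finset.univ v ⟨k, Finset.mem_univ k⟩
  have hvj : v j < 0 := (hj k (Finset.mem_univ k)).trans_lt hk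
  have hQv : (∑ l, Q j l) * v j ≤ (Q *ᵥ v) j := by
    rw [Finset.sum_mul]
    exact Finset.sum_le_sum fun l _ => mul_le_mul_of_nonneg_left (hj l (Finset.mem_univ l)) (hQ j l)
  have hvj' : 0 ≤ v j - (Q *ᵥ v) j := by simpa [sub_mulVec] using hv j
  nlinarith [hrow j]

theorem det_one_sub_ne_zero {Q : Matrix ι ι ℝ} (hQ : ∀ k l, 0 ≤ Q k l)
    (hrow : ∀ k, ∑ l, Q k l < 1) : (1 - Q).det ≠ 0 := by
  intro hdet
  obtain ⟨v, hv0, hv⟩ := exists_mulVec_eq_zero_iff.2 hdet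
  have hv' : (1 - Q) *ᵥ -v = 0 := by rw [mulVec_neg, hv, neg_zero]
  refine hv0 (funext fun k => le_antisymm ?_ ?_)
  · simpa using nonneg_of_one_sub_mulVec_nonneg hQ hrow (v := -v) (by simp [hv']) k
  · exact nonneg_of_one_sub_mulVec_nonneg hQ hrow (by simp [hv]) k

theorem det_one_sub_pos {Q : Matrix ι ι ℝ} (hQ : ∀ k l, 0 ≤ Q k l)
    (hrow : ∀ k, ∑ l, Q k l < 1) : 0 < (1 - Q).det := by
  have hne : ∀ t ∈ Set.Icc (0 : ℝ) 1, (1 - t • Q).det ≠ 0 := fun t ht =>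
    det_one_sub_ne_zero (fun k l => mul_nonneg ht.1 (hQ k l)) fun k => by
      rw [sum_smul_apply]
      exact (mul_le_of_le_one_left (Finset.sum_nonneg fun l _ => hQ k l) ht.2).trans_lt (hrow k)
  have hcont : Continuous fun t : ℝ => (1 - t • Q).det :=
    (continuous_const.sub (continuous_id.smul continuous_const)).matrix_det
  by_contra! hle
  obtain ⟨t, ht, h0⟩ := intermediate_value_Icc' zero_le_one hcont.continuousOn
    (show (0 : ℝ) ∈ Set.Icc _ _ from ⟨by simpa using hle, by simp⟩)
  exact hne t ht h0

theorem inv_one_sub_nonneg {Q : Matrix ι ι ℝ} (hQ : ∀ k l, 0 ≤ Q k l)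
    (hrow : ∀ k, ∑ l, Q k l < 1) (a b : ι) : 0 ≤ (1 - Q)⁻¹ a b := by
  have hunit : IsUnit (1 - Q).det := (det_one_sub_pos hQ hrow).ne'.isUnit
  have hcol := nonneg_of_one_sub_mulVec_nonneg hQ hrow (v := (1 - Q)⁻¹ *ᵥ Pi.single b 1)
    (fun k => by
      rw [mulVec_mulVec, mul_nonsing_inv _ hunit, one_mulVec]
      exact (Pi.single_nonneg (α := fun _ : ι => ℝ)).2 zero_le_one k) a
  simpa [mulVec_single_one] using hcol

theorem adjugate_one_sub_nonneg_of_lt {Q : Matrix ι ι ℝ} (hQ : ∀ k l, 0 ≤ Q k l)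
    (hrow : ∀ k, ∑ l, Q k l < 1) (a b : ι) : 0 ≤ (1 - Q).adjugate a b := by
  have hdet := det_one_sub_pos hQ hrow
  have h : (1 - Q).adjugate a b = (1 - Q).det * (1 - Q)⁻¹ a b := by
    simp [inv_def, Ring.inverse_eq_inv', hdet.ne']
  rw [h]
  exact mul_nonneg hdet.le (inv_one_sub_nonneg hQ hrow a b)

theorem nonneg_apply_one_sub_of_sum_le_one {N : Matrix ι ι ℝ} (hN : ∀ k l, 0 ≤ N k l)
    (hrow : ∀ k, ∑ l, N k l ≤ 1) {f : Matrix ι ι ℝ → ℝ} (hf : Continuous f)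
    (hpos : ∀ Q : Matrix ι ι ℝ, (∀ k l, 0 ≤ Q k l) → (∀ k, ∑ l, Q k l < 1) → 0 ≤ f (1 - Q)) :
    0 ≤ f (1 - N) := by
  have hclosed : IsClosed {t : ℝ | 0 ≤ f (1 - t • N)} :=
    isClosed_le continuous_const
      (hf.comp (continuous_const.sub (continuous_id.smul continuous_const)))
  have hIoo : Set.Ioo (0 : ℝ) 1 ⊆ {t : ℝ | 0 ≤ f (1 - t • N)} := fun t ht =>
    hpos _ (fun k l => mul_nonneg ht.1.le (hN k l)) fun k => by
      rw [sum_smul_apply]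
      exact (mul_le_of_le_one_right ht.1.le (hrow k)).trans_lt ht.2
  simpa using hclosed.closure_subset_iff.2 hIoo
    (show (1 : ℝ) ∈ closure (Set.Ioo 0 1) by simp [closure_Ioo])

theorem det_one_sub_nonneg {N : Matrix ι ι ℝ} (hN : ∀ k l, 0 ≤ N k l)
    (hrow : ∀ k, ∑ l, N k l ≤ 1) : 0 ≤ (1 - N).det :=
  nonneg_apply_one_sub_of_sum_le_one hN hrow (continuous_id.matrix_det) fun _ hQ hQrow =>
    (det_one_sub_pos hQ hQrow).le

theorem adjugate_one_sub_nonneg {N : Matrix ι ι ℝ} (hN : ∀ k l, 0 ≤ N k l)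
    (hrow : ∀ k, ∑ l, N k l ≤ 1) (a b : ι) : 0 ≤ (1 - N).adjugate a b :=
  nonneg_apply_one_sub_of_sum_le_one hN hrow (continuous_id.matrix_adjugate.matrix_elem a b)
    fun _ hQ hQrow => adjugate_one_sub_nonneg_of_lt hQ hQrow a b

theorem det_of_sum_smul {R J : Type*} [CommRing R] [Fintype J] (c : ι → J → R)
    (v : ι → J → ι → R) :
    (of fun k => ∑ j, c k j • v k j).det =
      ∑ g : ι → J, (∏ k, c k (g k)) * (of fun k => v k (g k)).det := by
  change (detRowAlternating (R := R) (n := ι)).toMultilinearMap (fun k => ∑ j, c k j • v k j) = _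
  rw [MultilinearMap.map_sum]
  refine Finset.sum_congr rfl fun g _ => ?_
  rw [MultilinearMap.map_smul_univ, smul_eq_mul]
  rfl

theorem det_of_sum_smul_le {J : Type*} [Fintype J] {γ : ℝ} {a b : ι → J → ℝ}
    {v : ι → J → ι → ℝ} (ha : ∀ k j, 0 ≤ a k j) (hab : ∀ k j, a k j ≤ γ * b k j)
    (hv : ∀ g : ι → J, 0 ≤ (of fun k => v k (g k)).det) :
    (of fun k => ∑ j, a k j • v k j).det ≤
      γ ^ Fintype.card ι * (of fun k => ∑ j, b k j • v k j).det := by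
  rw [det_of_sum_smul, det_of_sum_smul, Finset.mul_sum]
  refine Finset.sum_le_sum fun g _ => ?_
  have hprod : ∏ k, a k (g k) ≤ γ ^ Fintype.card ι * ∏ k, b k (g k) := by
    calc ∏ k, a k (g k) ≤ ∏ k, γ * b k (g k) :=
          Finset.prod_le_prod (fun k _ => ha k (g k)) fun k _ => hab k (g k)
      _ = γ ^ Fintype.card ι * ∏ k, b k (g k) := by
          rw [Finset.prod_mul_distrib, Finset.prod_const, Finset.card_univ]
  rw [← mul_assoc]
  exact mul_le_mul_of_nonneg_right hprod (hv g)

end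

section

variable {ι : Type*}

/-- Row `k` of `1 - α • P` is `(1 - α) e_k + ∑ m, α P k m (e_k - e_m)`; `none` indexes the first
term. These are its weights, `stepVec` its vectors. -/
def stepWeight (α : ℝ) (P : Matrix ι ι ℝ) (k : ι) : Option ι → ℝ
  | none => 1 - α
  | some m => α * P k m

theorem stepWeight_le {α γ : ℝ} (hα0 : 0 ≤ α) (hα1 : α ≤ 1) (hγ : 1 ≤ γ) {P₁ P₂ : Matrix ι ι ℝ}
    (h : ∀ k l, P₁ k l ≤ γ * P₂ k l) (k : ι) (j : Option ι) :
    stepWeight α P₁ k j ≤ γ * stepWeight α P₂ k j := by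
  cases j with
  | none => exact le_mul_of_one_le_left (sub_nonneg.2 hα1) hγ
  | some m =>
    calc α * P₁ k m ≤ α * (γ * P₂ k m) := mul_le_mul_of_nonneg_left (h k m) hα0
      _ = γ * (α * P₂ k m) := mul_left_comm _ _ _

variable [DecidableEq ι]

theorem updateRow_of_sum_smul {R J : Type*} [CommRing R] [Fintype J] [DecidableEq J]
    (c : ι → J → R) (v : ι → J → ι → R) (l : ι) (j₀ : J) (u : ι → R) :
    (of fun k => ∑ j, c k j • v k j).updateRow l u =
      of fun k => ∑ j, Function.update c l (Pi.single j₀ 1) k j •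
        Function.update v l (fun _ => u) k j := by
  ext k : 1
  rcases eq_or_ne k l with rfl | hk
  · simp [Pi.single_apply, ite_apply]
  · simp [hk]

theorem of_update_apply {R J : Type*} (v : ι → J → ι → R) (l : ι) (u : ι → R) (g : ι → J) :
    (of fun k => Function.update v l (fun _ => u) k (g k)) =
      (of fun k => v k (g k)).updateRow l u := by
  ext k : 1
  rcases eq_or_ne k l with rfl | hk
  · simp
  · simp [hk]

def ofPartialMap (g : ι → Option ι) : Matrix ι ι ℝ :=
  of fun k => (g k).elim 0 fun m => Pi.single m 1

theorem ofPartialMap_nonneg (g : ι → Option ι) (k l : ι) : 0 ≤ ofPartialMap g k l := by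
  cases h : g k <;> simp [ofPartialMap, h, Pi.single_apply, apply_ite]

def stepVec (k : ι) (j : Option ι) : ι → ℝ :=
  Pi.single k 1 - j.elim 0 fun m => Pi.single m 1

theorem of_stepVec (g : ι → Option ι) : (of fun k => stepVec k (g k)) = 1 - ofPartialMap g := by
  ext k l
  simp [stepVec, ofPartialMap, one_apply, Pi.single_apply, eq_comm]

variable [Fintype ι]

theorem sum_ofPartialMap_le_one (g : ι → Option ι) (k : ι) : ∑ l, ofPartialMap g k l ≤ 1 := by
  cases h : g k <;> simp [ofPartialMap, h]

theorem one_sub_smul_eq_of_stepVec {P : Matrix ι ι ℝ} (hP : P ∈ rowStochastic ℝ ι) (α : ℝ) :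
    1 - α • P = of fun k => ∑ j, stepWeight α P k j • stepVec k j := by
  ext k l
  rcases eq_or_ne k l with rfl | hkl
  · simp [Fintype.sum_option, stepWeight, stepVec, Pi.single_apply, mul_sub,
      Finset.sum_sub_distrib, ← Finset.mul_sum, sum_row_of_mem_rowStochastic hP k]
  · simp [Fintype.sum_option, stepWeight, stepVec, Pi.single_apply, hkl, eq_comm]

theorem stepWeight_nonneg {α : ℝ} (hα0 : 0 ≤ α) (hα1 : α ≤ 1) {P : Matrix ι ι ℝ}
    (hP : P ∈ rowStochastic ℝ ι) (k : ι) (j : Option ι) : 0 ≤ stepWeight α P k j := by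
  cases j with
  | none => exact sub_nonneg.2 hα1
  | some m => exact mul_nonneg hα0 (hP.1 k m)

theorem det_one_sub_smul_le {α γ : ℝ} (hα0 : 0 ≤ α) (hα1 : α ≤ 1) (hγ : 1 ≤ γ)
    {P₁ P₂ : Matrix ι ι ℝ} (hP₁ : P₁ ∈ rowStochastic ℝ ι) (hP₂ : P₂ ∈ rowStochastic ℝ ι)
    (h : ∀ k l, P₁ k l ≤ γ * P₂ k l) :
    (1 - α • P₁).det ≤ γ ^ Fintype.card ι * (1 - α • P₂).det := by
  rw [one_sub_smul_eq_of_stepVec hP₁, one_sub_smul_eq_of_stepVec hP₂]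
  refine det_of_sum_smul_le (stepWeight_nonneg hα0 hα1 hP₁) (stepWeight_le hα0 hα1 hγ h)
    fun g => ?_
  rw [of_stepVec]
  exact det_one_sub_nonneg (ofPartialMap_nonneg g) (sum_ofPartialMap_le_one g)

theorem adjugate_one_sub_smul_le {α γ : ℝ} (hα0 : 0 ≤ α) (hα1 : α ≤ 1) (hγ : 1 ≤ γ)
    {P₁ P₂ : Matrix ι ι ℝ} (hP₁ : P₁ ∈ rowStochastic ℝ ι) (hP₂ : P₂ ∈ rowStochastic ℝ ι)
    (h : ∀ k l, P₁ k l ≤ γ * P₂ k l) (i l : ι) :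
    (1 - α • P₁).adjugate i l ≤ γ ^ Fintype.card ι * (1 - α • P₂).adjugate i l := by
  rw [adjugate_apply, adjugate_apply, one_sub_smul_eq_of_stepVec hP₁,
    one_sub_smul_eq_of_stepVec hP₂, updateRow_of_sum_smul _ _ l none,
    updateRow_of_sum_smul _ _ l none]
  -- row `l` is now `e_i`, with the weight vector `Pi.single none 1` for both matrices
  refine det_of_sum_smul_le (fun k j => ?_) (fun k j => ?_) fun g => ?_
  · rcases eq_or_ne k l with rfl | hk
    · simp only [Function.update_self]
      exact (Pi.single_nonneg (α := fun _ : Option ι => ℝ)).2 zero_le_one j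
    · simpa [hk] using stepWeight_nonneg hα0 hα1 hP₁ k j
  · rcases eq_or_ne k l with rfl | hk
    · simp only [Function.update_self]
      exact le_mul_of_one_le_left
        ((Pi.single_nonneg (α := fun _ : Option ι => ℝ)).2 zero_le_one j) hγ
    · simpa [hk] using stepWeight_le hα0 hα1 hγ h k j
  · rw [of_update_apply, of_stepVec, ← adjugate_apply]
    exact adjugate_one_sub_nonneg (ofPartialMap_nonneg g) (sum_ofPartialMap_le_one g) i l

theorem smul_nonneg_of_mem_rowStochastic {α : ℝ} (hα0 : 0 ≤ α) {P : Matrix ι ι ℝ}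
    (hP : P ∈ rowStochastic ℝ ι) (k l : ι) : 0 ≤ (α • P) k l :=
  mul_nonneg hα0 (hP.1 k l)

theorem sum_smul_lt_one_of_mem_rowStochastic {α : ℝ} (hα1 : α < 1) {P : Matrix ι ι ℝ}
    (hP : P ∈ rowStochastic ℝ ι) (k : ι) : ∑ l, (α • P) k l < 1 := by
  rwa [sum_smul_apply, sum_row_of_mem_rowStochastic hP k, mul_one]

theorem inv_one_sub_smul_le {α γ : ℝ} (hα0 : 0 ≤ α) (hα1 : α < 1) (hγ : 1 ≤ γ)
    {P₁ P₂ : Matrix ι ι ℝ} (hP₁ : P₁ ∈ rowStochastic ℝ ι) (hP₂ : P₂ ∈ rowStochastic ℝ ι)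
    (h₁₂ : ∀ k l, P₁ k l ≤ γ * P₂ k l) (h₂₁ : ∀ k l, P₂ k l ≤ γ * P₁ k l) (i l : ι) :
    (1 - α • P₁)⁻¹ i l ≤ γ ^ (2 * Fintype.card ι) * (1 - α • P₂)⁻¹ i l := by
  have hd₁ := det_one_sub_pos (smul_nonneg_of_mem_rowStochastic hα0 hP₁)
    (sum_smul_lt_one_of_mem_rowStochastic hα1 hP₁)
  have hd₂ := det_one_sub_pos (smul_nonneg_of_mem_rowStochastic hα0 hP₂)
    (sum_smul_lt_one_of_mem_rowStochastic hα1 hP₂)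
  have hadj₂ := adjugate_one_sub_nonneg_of_lt (smul_nonneg_of_mem_rowStochastic hα0 hP₂)
    (sum_smul_lt_one_of_mem_rowStochastic hα1 hP₂) i l
  have hadj := adjugate_one_sub_smul_le hα0 hα1.le hγ hP₁ hP₂ h₁₂ i l
  have hdet := det_one_sub_smul_le hα0 hα1.le hγ hP₂ hP₁ h₂₁
  simp only [inv_def, Ring.inverse_eq_inv', smul_apply, smul_eq_mul, ← div_eq_inv_mul]
  rw [← mul_div_assoc, div_le_div_iff₀ hd₁ hd₂, pow_mul', sq]
  calc (1 - α • P₁).adjugate i l * (1 - α • P₂).det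
      ≤ (γ ^ Fintype.card ι * (1 - α • P₂).adjugate i l) *
          (γ ^ Fintype.card ι * (1 - α • P₁).det) :=
        mul_le_mul hadj hdet hd₂.le (mul_nonneg (by positivity) hadj₂)
    _ = _ := by ring

theorem one_sub_mul_sum_inv_one_sub_smul_apply {α : ℝ} (hα0 : 0 ≤ α) (hα1 : α < 1)
    {P : Matrix ι ι ℝ} (hP : P ∈ rowStochastic ℝ ι) (i : ι) :
    (1 - α) * ∑ l, (1 - α • P)⁻¹ i l = 1 := by
  have hunit : IsUnit (1 - α • P).det :=
    (det_one_sub_pos (smul_nonneg_of_mem_rowStochastic hα0 hP)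
      (sum_smul_lt_one_of_mem_rowStochastic hα1 hP)).ne'.isUnit
  have hone : (1 - α • P) *ᵥ 1 = (1 - α) • (1 : ι → ℝ) := by
    rw [sub_mulVec, one_mulVec, smul_mulVec, hP.2, sub_smul, one_smul]
  have h := congrArg ((1 - α • P)⁻¹ *ᵥ ·) hone
  rw [mulVec_mulVec, nonsing_inv_mul _ hunit, one_mulVec, mulVec_smul] at h
  simpa [mulVec, dotProduct] using (congrFun h i).symm

end

end Matrix

theorem abs_sum_mul_sub_sum_mul_le {ι : Type*} [Fintype ι] {w₁ w₂ r₁ r₂ : ι → ℝ} {K M c : ℝ}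
    (hK : 0 < K) (hw₂ : ∀ l, 0 ≤ w₂ l) (hsum : ∑ l, w₂ l = 1) (h₁₂ : ∀ l, w₁ l ≤ K * w₂ l)
    (h₂₁ : ∀ l, w₂ l ≤ K * w₁ l) (hM : ∀ l, |r₁ l| ≤ M) (hc : ∀ l, |r₁ l - r₂ l| ≤ c) :
    |∑ l, w₁ l * r₁ l - ∑ l, w₂ l * r₂ l| ≤ (K - 1) * M + c := by
  have hw : ∀ l, |w₁ l - w₂ l| ≤ (K - 1) * w₂ l := fun l => by
    rw [abs_sub_le_iff]
    constructor
    · linarith [h₁₂ l]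
    · nlinarith [h₂₁ l, hw₂ l, mul_nonneg (hw₂ l) (sq_nonneg (K - 1))]
  calc |∑ l, w₁ l * r₁ l - ∑ l, w₂ l * r₂ l|
      = |∑ l, ((w₁ l - w₂ l) * r₁ l + w₂ l * (r₁ l - r₂ l))| := by
        rw [← Finset.sum_sub_distrib]; congr 1; exact Finset.sum_congr rfl fun l _ => by ring
    _ ≤ ∑ l, ((K - 1) * M + c) * w₂ l := by
        refine (Finset.abs_sum_le_sum_abs _ _).trans (Finset.sum_le_sum fun l _ => ?_)
        calc |(w₁ l - w₂ l) * r₁ l + w₂ l * (r₁ l - r₂ l)|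
            ≤ |w₁ l - w₂ l| * |r₁ l| + w₂ l * |r₁ l - r₂ l| := 
              (abs_add_le _ _).trans_eq (by rw [abs_mul, abs_mul, abs_of_nonneg (hw₂ l)])
          _ ≤ (K - 1) * w₂ l * M + w₂ l * c :=
              add_le_add (mul_le_mul (hw l) (hM l) (abs_nonneg _) ((abs_nonneg _).trans (hw l)))
                (mul_le_mul_of_nonneg_left (hc l) (hw₂ l))
          _ = ((K - 1) * M + c) * w₂ l := by ring
    _ = (K - 1) * M + c := by rw [← Finset.mul_sum, hsum, mul_one]

theorem le_one_add_mul_of_div_sub_one_le {x y δ : ℝ} (hy : 0 ≤ y)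
    (hxy : 0 < x ↔ 0 < y) (h : 0 < x → 0 < y → x / y - 1 ≤ δ) : x ≤ (1 + δ) * y := by
  rcases hy.lt_or_eq with hy | rfl
  · rw [← div_le_iff₀ hy]
    linarith [h (hxy.2 hy) hy]
  · simpa using not_lt.1 (mt hxy.1 (lt_irrefl 0))

theorem one_add_div_pow_le {ε : ℝ} (hε0 : 0 ≤ ε) (hε2 : ε ≤ 2) {m : ℕ} (hm : 0 < m) :
    (1 + ε / (8 * m)) ^ (2 * m) ≤ 1 + ε / 2 := by
  calc (1 + ε / (8 * m)) ^ (2 * m) ≤ Real.exp (ε / (8 * m)) ^ (2 * m) :=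
        pow_le_pow_left₀ (by positivity) (by linarith [Real.add_one_le_exp (ε / (8 * m))]) _
    _ = Real.exp (ε / 4) := by
        rw [← Real.exp_nat_mul]
        congr 1
        field_simp
        push_cast
        ring
    _ ≤ 1 / (1 - ε / 4) := Real.exp_bound_div_one_sub_of_interval (by positivity) (by linarith)
    _ ≤ 1 + ε / 2 := by
        rw [div_le_iff₀ (by linarith)]
        nlinarith

theorem abs_one_sub_mul_inv_one_sub_smul_mulVec_sub_le {ι : Type*} [Fintype ι] [DecidableEq ι]
    {α γ : ℝ} (hα0 : 0 ≤ α) (hα1 : α < 1) (hγ : 1 ≤ γ) {P₁ P₂ : Matrix ι ι ℝ}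
    (hP₁ : P₁ ∈ rowStochastic ℝ ι) (hP₂ : P₂ ∈ rowStochastic ℝ ι)
    (h₁₂ : ∀ k l, P₁ k l ≤ γ * P₂ k l) (h₂₁ : ∀ k l, P₂ k l ≤ γ * P₁ k l)
    {r₁ r₂ : ι → ℝ} {M c : ℝ} (hM : ∀ k, |r₁ k| ≤ M) (hc : ∀ k, |r₁ k - r₂ k| ≤ c) (i : ι) :
    |(1 - α) * ((1 - α • P₁)⁻¹ *ᵥ r₁) i - (1 - α) * ((1 - α • P₂)⁻¹ *ᵥ r₂) i| ≤
      (γ ^ (2 * Fintype.card ι) - 1) * M + c := by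
  have hweights : ∀ (P : Matrix ι ι ℝ) (r : ι → ℝ),
      (1 - α) * ((1 - α • P)⁻¹ *ᵥ r) i = ∑ l, (1 - α) * (1 - α • P)⁻¹ i l * r l := by
    simp [mulVec, dotProduct, Finset.mul_sum, mul_assoc]
  have h1α : 0 ≤ 1 - α := sub_nonneg.2 hα1.le
  rw [hweights, hweights]
  refine abs_sum_mul_sub_sum_mul_le (by positivity)
    (fun l => mul_nonneg h1α (inv_one_sub_nonneg (smul_nonneg_of_mem_rowStochastic hα0 hP₂)
      (sum_smul_lt_one_of_mem_rowStochastic hα1 hP₂) i l))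
    (by rw [← Finset.mul_sum]; exact one_sub_mul_sum_inv_one_sub_smul_apply hα0 hα1 hP₂ i)
    (fun l => ?_) (fun l => ?_) hM hc
  · rw [mul_left_comm]
    exact mul_le_mul_of_nonneg_left (inv_one_sub_smul_le hα0 hα1 hγ hP₁ hP₂ h₁₂ h₂₁ i l) h1α
  · rw [mul_left_comm]
    exact mul_le_mul_of_nonneg_left (inv_one_sub_smul_le hα0 hα1 hγ hP₂ hP₁ h₂₁ h₁₂ i l) h1α

theorem stmt_5 (n : ℕ) (ε : ℝ) (hε : ε ∈ Set.Ioo (0:ℝ) 1)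
    (P₁ P₂ : Matrix (Fin n) (Fin n) ℝ)
    (hP₁ : ∀ k l, 0 ≤ P₁ k l) (hP₁row : ∀ k, ∑ l, P₁ k l = 1)
    (hP₂ : ∀ k l, 0 ≤ P₂ k l) (hP₂row : ∀ k, ∑ l, P₂ k l = 1)
    (r₁ r₂ : Fin n → ℝ) (i : Fin n)
    (hA1 : ∀ k l, 0 < P₁ k l ↔ 0 < P₂ k l)
    (hA2 : ∀ k l, 0 < P₁ k l → 0 < P₂ k l →
      max (P₁ k l / P₂ k l) (P₂ k l / P₁ k l) - 1 ≤ ε / (8 * n))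
    (hA3 : ∀ k, |r₁ k - r₂ k| ≤ ε / 2)
    (φ₁ φ₂ : ℝ)
    (hφ₁ : Tendsto (fun α : ℝ => (1 - α) * ((1 - α • P₁)⁻¹ *ᵥ r₁) i)
      (nhdsWithin 1 (Set.Iio 1)) (nhds φ₁))
    (hφ₂ : Tendsto (fun α : ℝ => (1 - α) * ((1 - α • P₂)⁻¹ *ᵥ r₂) i)
      (nhdsWithin 1 (Set.Iio 1)) (nhds φ₂)) :
    |φ₁ - φ₂| ≤ ε / 2 + ε / 2 *
      Finset.univ.sup' ⟨i, Finset.mem_univ i⟩ (fun k => |r₁ k|) := by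
  obtain ⟨hε0, hε1⟩ := hε
  set M := Finset.univ.sup' ⟨i, Finset.mem_univ i⟩ fun k => |r₁ k|
  have hM : ∀ k, |r₁ k| ≤ M := fun k => Finset.le_sup' (fun k => |r₁ k|) (Finset.mem_univ k)
  have hS₁ : P₁ ∈ rowStochastic ℝ (Fin n) := mem_rowStochastic_iff_sum.2 ⟨hP₁, hP₁row⟩
  have hS₂ : P₂ ∈ rowStochastic ℝ (Fin n) := mem_rowStochastic_iff_sum.2 ⟨hP₂, hP₂row⟩
  have hγ : 1 ≤ 1 + ε / (8 * n) := le_add_of_nonneg_right (by positivity)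
  have h₁₂ : ∀ k l, P₁ k l ≤ (1 + ε / (8 * n)) * P₂ k l := fun k l =>
    le_one_add_mul_of_div_sub_one_le (hP₂ k l) (hA1 k l) fun h₁ h₂ =>
      (sub_le_sub_right (le_max_left _ _) 1).trans (hA2 k l h₁ h₂)
  have h₂₁ : ∀ k l, P₂ k l ≤ (1 + ε / (8 * n)) * P₁ k l := fun k l =>
    le_one_add_mul_of_div_sub_one_le (hP₁ k l) (hA1 k l).symm fun h₂ h₁ =>
      (sub_le_sub_right (le_max_right _ _) 1).trans (hA2 k l h₁ h₂)
  have hpow := one_add_div_pow_le hε0.le (by linarith) i.pos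
  refine le_of_tendsto (hφ₁.sub hφ₂).abs ?_
  filter_upwards [Ioo_mem_nhdsLT zero_lt_one] with α hα
  have h := abs_one_sub_mul_inv_one_sub_smul_mulVec_sub_le hα.1.le hα.2 hγ hS₁ hS₂ h₁₂ h₂₁ hM hA3 i
  rw [Fintype.card_fin] at h
  nlinarith [(abs_nonneg _).trans (hM i)]
end

section
/- Let P be an n×n row-stochastic matrix and r ∈ ℝⁿ. Then there exists L ∈ ℝⁿ such that both (1/T)·∑_{t=0}^{T−1} (Pᵗ r) → L as T → ∞, and (1−α)·((I − α·P)⁻¹ *ᵥ r) → L as α → 1 from the left. -/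
/-! A stochastic matrix is nonexpansive in the sup norm, so its powers are bounded. Hence a vector
`v = P w - w` fixed by `P` vanishes (its Cesàro sums `T • v = P ^ T w - w` stay bounded), and by a
dimension count every `r` splits as `z + (P w - w)` with `P z = z`. Both averages fix `z`; on
`P w - w` the Cesàro average telescopes to `(P ^ T w - w) / T`, and the Abel average is
`O((1 - α) ‖w‖ / α)` by the resolvent bound `(1 - α) ‖(1 - α P)⁻¹‖ ≤ 1`. -/

open Matrix Filter Topology

theorem LinearMap.isCompl_ker_range_of_disjoint {K V : Type*} [DivisionRing K] [AddCommGroup V]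
    [Module K V] [FiniteDimensional K V] {f : V →ₗ[K] V} (h : Disjoint (ker f) (range f)) :
    IsCompl (ker f) (range f) :=
  (Submodule.isCompl_iff_disjoint _ _ (by rw [add_comm, f.finrank_range_add_finrank_ker])).2 h

namespace Matrix

variable {ι : Type*} [Fintype ι]

theorem norm_mulVec_le_of_nonneg_of_sum_le_one {P : Matrix ι ι ℝ} (hP : ∀ k l, 0 ≤ P k l)
    (hProw : ∀ k, ∑ l, P k l ≤ 1) (v : ι → ℝ) : ‖P *ᵥ v‖ ≤ ‖v‖ := by
  refine (pi_norm_le_iff_of_nonneg (norm_nonneg v)).2 fun k => ?_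
  calc ‖(P *ᵥ v) k‖ ≤ ∑ l, ‖P k l * v l‖ := norm_sum_le _ _
    _ ≤ ∑ l, P k l * ‖v‖ := by
        gcongr with l
        rw [norm_mul, Real.norm_of_nonneg (hP k l)]
        exact mul_le_mul_of_nonneg_left (norm_le_pi_norm v l) (hP k l)
    _ ≤ ‖v‖ := by
        rw [← Finset.sum_mul]
        exact mul_le_of_le_one_left (norm_nonneg v) (hProw k)

variable [DecidableEq ι]

theorem pow_mulVec_of_mulVec_eq {R : Type*} [CommSemiring R] {P : Matrix ι ι R}
    {z : ι → R} (hz : P *ᵥ z = z) (t : ℕ) : (P ^ t) *ᵥ z = z := by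
  induction t with
  | zero => simp
  | succ t ih => rw [pow_succ, ← mulVec_mulVec, hz, ih]

theorem sum_range_pow_mulVec_of_mulVec_eq {R : Type*} [CommSemiring R] {P : Matrix ι ι R}
    {z : ι → R} (hz : P *ᵥ z = z) (T : ℕ) :
    ∑ t ∈ Finset.range T, (P ^ t) *ᵥ z = T • z := by
  simp [pow_mulVec_of_mulVec_eq hz]

theorem sum_range_pow_mulVec_mulVec_sub {R : Type*} [CommRing R] (P : Matrix ι ι R) (w : ι → R)
    (T : ℕ) :
    ∑ t ∈ Finset.range T, (P ^ t) *ᵥ (P *ᵥ w - w) = (P ^ T) *ᵥ w - w := by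
  simp_rw [mulVec_sub, mulVec_mulVec, ← pow_succ]
  simpa using Finset.sum_range_sub (fun t => (P ^ t) *ᵥ w) T

variable {P : Matrix ι ι ℝ} {α : ℝ}

theorem norm_pow_mulVec_le (hP : ∀ v : ι → ℝ, ‖P *ᵥ v‖ ≤ ‖v‖)
    (t : ℕ) (v : ι → ℝ) : ‖(P ^ t) *ᵥ v‖ ≤ ‖v‖ := by
  induction t with
  | zero => simp
  | succ t ih =>
    rw [pow_succ', ← mulVec_mulVec]
    exact (hP _).trans ih

theorem eq_zero_of_mulVec_eq_of_eq_mulVec_sub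
    (hP : ∀ v : ι → ℝ, ‖P *ᵥ v‖ ≤ ‖v‖) {v w : ι → ℝ} (hv : P *ᵥ v = v) (hw : P *ᵥ w - w = v) :
    v = 0 := by
  have hbound (T : ℕ) : T * ‖v‖ ≤ 2 * ‖w‖ := by
    have hT : (T : ℝ) • v = (P ^ T) *ᵥ w - w := by
      rw [Nat.cast_smul_eq_nsmul, ← sum_range_pow_mulVec_of_mulVec_eq hv, ← hw,
        sum_range_pow_mulVec_mulVec_sub]
    calc T * ‖v‖ = ‖(P ^ T) *ᵥ w - w‖ := by
          rw [← hT, norm_smul, Real.norm_natCast]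
      _ ≤ ‖(P ^ T) *ᵥ w‖ + ‖w‖ := norm_sub_le _ _
      _ ≤ 2 * ‖w‖ := by linarith [norm_pow_mulVec_le hP T w]
  by_contra hv0
  obtain ⟨T, hT⟩ := exists_nat_gt (2 * ‖w‖ / ‖v‖)
  rw [div_lt_iff₀ (norm_pos_iff.2 hv0)] at hT
  linarith [hbound T]

theorem exists_eq_add_mulVec_sub (hP : ∀ v : ι → ℝ, ‖P *ᵥ v‖ ≤ ‖v‖) (r : ι → ℝ) :
    ∃ z w, P *ᵥ z = z ∧ r = z + (P *ᵥ w - w) := by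
  set f := P.mulVecLin - 1
  have hf (v : ι → ℝ) : f v = P *ᵥ v - v := rfl
  have hdisj : Disjoint (LinearMap.ker f) (LinearMap.range f) := by
    refine Submodule.disjoint_def.2 fun v hv ⟨w, hw⟩ => ?_
    rw [LinearMap.mem_ker, hf, sub_eq_zero] at hv
    exact eq_zero_of_mulVec_eq_of_eq_mulVec_sub hP hv hw
  obtain ⟨z, hz, _, ⟨w, rfl⟩, hr⟩ :=
    Submodule.mem_sup.1 ((LinearMap.isCompl_ker_range_of_disjoint hdisj).sup_eq_top ▸
      Submodule.mem_top (x := r))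
  exact ⟨z, w, sub_eq_zero.1 hz, hr.symm⟩

theorem tendsto_cesaro_pow_mulVec_add_mulVec_sub
    (hP : ∀ v : ι → ℝ, ‖P *ᵥ v‖ ≤ ‖v‖) {z : ι → ℝ} (hz : P *ᵥ z = z) (w : ι → ℝ) :
    Tendsto (fun T : ℕ => (1 / (T : ℝ)) • ∑ t ∈ Finset.range T, (P ^ t) *ᵥ (z + (P *ᵥ w - w)))
      atTop (𝓝 z) := by
  have hsum (T : ℕ) : ∑ t ∈ Finset.range T, (P ^ t) *ᵥ (z + (P *ᵥ w - w)) =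
      (T : ℝ) • z + ((P ^ T) *ᵥ w - w) := by
    simp_rw [mulVec_add, Finset.sum_add_distrib, sum_range_pow_mulVec_of_mulVec_eq hz,
      sum_range_pow_mulVec_mulVec_sub, Nat.cast_smul_eq_nsmul]
  have hfix : ∀ᶠ T : ℕ in atTop, z = (1 / (T : ℝ)) • ((T : ℝ) • z) := by
    filter_upwards [eventually_ne_atTop 0] with T hT
    rw [smul_smul, one_div_mul_cancel (Nat.cast_ne_zero.2 hT), one_smul]
  have hcob : Tendsto (fun T : ℕ => (1 / (T : ℝ)) • ((P ^ T) *ᵥ w - w)) atTop (𝓝 0) := by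
    refine tendsto_one_div_atTop_nhds_zero_nat.zero_smul_isBoundedUnder_le
      (isBoundedUnder_of ⟨2 * ‖w‖, fun T => ?_⟩)
    calc ‖(P ^ T) *ᵥ w - w‖ ≤ ‖(P ^ T) *ᵥ w‖ + ‖w‖ := norm_sub_le _ _
      _ ≤ 2 * ‖w‖ := by linarith [norm_pow_mulVec_le hP T w]
  simpa only [hsum, smul_add, add_zero] using
    (tendsto_const_nhds.congr' hfix).add hcob

theorem one_sub_smul_mulVec (P : Matrix ι ι ℝ) (α : ℝ) (v : ι → ℝ) :
    (1 - α • P) *ᵥ v = v - α • P *ᵥ v := by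
  rw [sub_mulVec, one_mulVec, smul_mulVec]

theorem mul_norm_le_norm_one_sub_smul_mulVec (hP : ∀ v : ι → ℝ, ‖P *ᵥ v‖ ≤ ‖v‖) (hα : 0 ≤ α)
    (v : ι → ℝ) : (1 - α) * ‖v‖ ≤ ‖(1 - α • P) *ᵥ v‖ := by
  rw [one_sub_smul_mulVec]
  calc (1 - α) * ‖v‖ = ‖v‖ - α * ‖v‖ := by ring
    _ ≤ ‖v‖ - ‖α • P *ᵥ v‖ := by
        rw [norm_smul, Real.norm_of_nonneg hα]
        gcongr
        exact hP v
    _ ≤ ‖v - α • P *ᵥ v‖ := norm_sub_norm_le _ _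

theorem isUnit_det_one_sub_smul (hP : ∀ v : ι → ℝ, ‖P *ᵥ v‖ ≤ ‖v‖) (hα0 : 0 ≤ α) (hα1 : α < 1) :
    IsUnit (1 - α • P).det := by
  rw [← isUnit_iff_isUnit_det, ← mulVec_injective_iff_isUnit]
  refine (injective_iff_map_eq_zero (1 - α • P).mulVecLin).2 fun v hv => ?_
  have hle := mul_norm_le_norm_one_sub_smul_mulVec hP hα0 v
  rw [← mulVecLin_apply, hv, norm_zero] at hle
  exact norm_le_zero_iff.1 (nonpos_of_mul_nonpos_right hle (sub_pos.2 hα1))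

theorem mul_norm_inv_mulVec_le (hP : ∀ v : ι → ℝ, ‖P *ᵥ v‖ ≤ ‖v‖) (hα0 : 0 ≤ α) (hα1 : α < 1)
    (v : ι → ℝ) : (1 - α) * ‖(1 - α • P)⁻¹ *ᵥ v‖ ≤ ‖v‖ := by
  have h := mul_norm_le_norm_one_sub_smul_mulVec hP hα0 ((1 - α • P)⁻¹ *ᵥ v)
  rwa [mulVec_mulVec, mul_nonsing_inv _ (isUnit_det_one_sub_smul hP hα0 hα1), one_mulVec] at h

theorem one_sub_smul_inv_mulVec_of_mulVec_eq (h : IsUnit (1 - α • P).det) {z : ι → ℝ}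
    (hz : P *ᵥ z = z) : (1 - α) • ((1 - α • P)⁻¹ *ᵥ z) = z := by
  have hMz : (1 - α • P) *ᵥ z = (1 - α) • z := by
    rw [one_sub_smul_mulVec, hz, sub_smul, one_smul]
  rw [← mulVec_smul, ← hMz, mulVec_mulVec, nonsing_inv_mul _ h, one_mulVec]

theorem smul_inv_mulVec_mulVec_sub (h : IsUnit (1 - α • P).det) (w : ι → ℝ) :
    α • ((1 - α • P)⁻¹ *ᵥ (P *ᵥ w - w)) = (1 - α) • ((1 - α • P)⁻¹ *ᵥ w) - w := by
  have hw : α • (P *ᵥ w - w) = (1 - α) • w - (1 - α • P) *ᵥ w := by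
    rw [one_sub_smul_mulVec]
    module
  rw [← mulVec_smul, hw, mulVec_sub, mulVec_smul, mulVec_mulVec, nonsing_inv_mul _ h, one_mulVec]

theorem norm_one_sub_smul_inv_mulVec_mulVec_sub_le (hP : ∀ v : ι → ℝ, ‖P *ᵥ v‖ ≤ ‖v‖)
    (hα0 : 0 < α) (hα1 : α < 1) (w : ι → ℝ) :
    ‖(1 - α) • ((1 - α • P)⁻¹ *ᵥ (P *ᵥ w - w))‖ ≤ (1 - α) * (2 * ‖w‖ / α) := by
  rw [norm_smul, Real.norm_of_nonneg (sub_nonneg.2 hα1.le)]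
  gcongr
  rw [le_div_iff₀' hα0]
  calc α * ‖(1 - α • P)⁻¹ *ᵥ (P *ᵥ w - w)‖
      = ‖(1 - α) • ((1 - α • P)⁻¹ *ᵥ w) - w‖ := by
        rw [← smul_inv_mulVec_mulVec_sub (isUnit_det_one_sub_smul hP hα0.le hα1), norm_smul,
          Real.norm_of_nonneg hα0.le]
    _ ≤ ‖(1 - α) • ((1 - α • P)⁻¹ *ᵥ w)‖ + ‖w‖ := norm_sub_le _ _
    _ ≤ 2 * ‖w‖ := by
        rw [norm_smul, Real.norm_of_nonneg (sub_nonneg.2 hα1.le)]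
        linarith [mul_norm_inv_mulVec_le hP hα0.le hα1 w]

theorem tendsto_one_sub_smul_inv_mulVec_add_mulVec_sub (hP : ∀ v : ι → ℝ, ‖P *ᵥ v‖ ≤ ‖v‖)
    {z : ι → ℝ} (hz : P *ᵥ z = z) (w : ι → ℝ) :
    Tendsto (fun α : ℝ => (1 - α) • ((1 - α • P)⁻¹ *ᵥ (z + (P *ᵥ w - w)))) (𝓝[<] 1) (𝓝 z) := by
  have hbound : ∀ᶠ α in 𝓝[<] (1 : ℝ),
      ‖(1 - α) • ((1 - α • P)⁻¹ *ᵥ (z + (P *ᵥ w - w))) - z‖ ≤ (1 - α) * (2 * ‖w‖ / α) := by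
    filter_upwards [Ioo_mem_nhdsLT one_pos] with α ⟨hα0, hα1⟩
    rw [mulVec_add, smul_add,
      one_sub_smul_inv_mulVec_of_mulVec_eq (isUnit_det_one_sub_smul hP hα0.le hα1) hz,
      add_sub_cancel_left]
    exact norm_one_sub_smul_inv_mulVec_mulVec_sub_le hP hα0 hα1 w
  have hlim : Tendsto (fun α : ℝ => (1 - α) * (2 * ‖w‖ / α)) (𝓝[<] 1) (𝓝 0) := by
    have hcont : ContinuousAt (fun α : ℝ => (1 - α) * (2 * ‖w‖ / α)) 1 := by
      fun_prop (disch := norm_num)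
    simpa using hcont.tendsto.mono_left nhdsWithin_le_nhds
  exact tendsto_sub_nhds_zero_iff.1 (squeeze_zero_norm' hbound hlim)

end Matrix

theorem stmt_6 (n : ℕ) (P : Matrix (Fin n) (Fin n) ℝ)
    (hP : ∀ k l, 0 ≤ P k l) (hProw : ∀ k, ∑ l, P k l = 1)
    (r : Fin n → ℝ) :
    ∃ L : Fin n → ℝ,
      Tendsto (fun T : ℕ => (1 / (T : ℝ)) • ∑ t ∈ Finset.range T, (P ^ t) *ᵥ r)
        atTop (nhds L) ∧
      Tendsto (fun α : ℝ => (1 - α) • ((1 - α • P)⁻¹ *ᵥ r))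
        (nhdsWithin 1 (Set.Iio 1)) (nhds L) := by
  have hcontr := norm_mulVec_le_of_nonneg_of_sum_le_one hP fun k => (hProw k).le
  obtain ⟨z, w, hz, rfl⟩ := exists_eq_add_mulVec_sub hcontr r
  exact ⟨z, tendsto_cesaro_pow_mulVec_add_mulVec_sub hcontr hz w,
    tendsto_one_sub_smul_inv_mulVec_add_mulVec_sub hcontr hz w⟩
end

section
/- For every n ≥ 1 there exists t ∈ ℕ, depending only on n, such that the following holds: for every n×n row-stochastic matrix P that is irreducible (for all states i, j there exists m ≥ 1 with (Pᵐ)_{ij} > 0) and aperiodic (for every state i, the gcd of {m ≥ 1 : (Pᵐ)_{ii} > 0} is 1), and for every p_min > 0 such that every nonzero entry of P is at least p_min, one has (Pᵗ)_{ij} ≥ p_min^t > 0 for all states i, j. -/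
/-!
For nonnegative `P`, `0 < (P ^ m) i j` says that there is a walk of length `m` from `i` to `j`
along positive entries. A walk of length at least `n * a` visits some pair (vertex, time mod `a`)
twice; cutting out the cycle in between shows that every walk can be replaced by one of length
`< n * a` in the same residue class mod `a`.

The return times to `i` form an additive submonoid of `ℕ` of gcd `1`, hence meet every residue
class mod `a`. Taking for `a` a return time `≤ n`, shortened returns plus multiples of `a` give
every time `≥ n * n`; prepending such a return to a walk from `i` to `j` of length `< n` gives
`0 < (P ^ (n * n + n)) i j`. A positive entry of `P ^ t` dominates a product of `t` positive
entries of `P`, so it is at least `pmin ^ t`.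
-/

open Finset

namespace Matrix

variable {ι R : Type*} [Semiring R] [LinearOrder R] {P : Matrix ι ι R}

variable (P) in
def PosWalk (m : ℕ) (i j : ι) : Prop :=
  ∃ f : ℕ → ι, f 0 = i ∧ f m = j ∧ ∀ s < m, 0 < P (f s) (f (s + 1))

theorem posWalk_succ_iff {m : ℕ} {i j : ι} :
    PosWalk P (m + 1) i j ↔ ∃ k, PosWalk P m i k ∧ 0 < P k j := by
  constructor
  · rintro ⟨f, hf0, hfm, hf⟩
    exact ⟨f m, ⟨f, hf0, rfl, fun s hs ↦ hf s (by omega)⟩, hfm ▸ hf m (by omega)⟩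
  · rintro ⟨k, ⟨f, hf0, hfm, hf⟩, hkj⟩
    refine ⟨fun s ↦ if s ≤ m then f s else j, by simpa using hf0, by simp, fun s hs ↦ ?_⟩
    rcases Nat.lt_or_ge s m with hsm | hsm
    · simpa [hsm.le, Nat.succ_le_of_lt hsm] using hf s hsm
    · obtain rfl : s = m := by omega
      simpa [hfm] using hkj

variable [Fintype ι] [DecidableEq ι] [IsStrictOrderedRing R]

theorem pow_add_apply_pos (hP : ∀ i j, 0 ≤ P i j) {m m' : ℕ} {i j k : ι}
    (hij : 0 < (P ^ m) i j) (hjk : 0 < (P ^ m') j k) : 0 < (P ^ (m + m')) i k := by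
  rw [pow_add, mul_apply, sum_pos_iff_of_nonneg fun l _ ↦
    mul_nonneg (pow_apply_nonneg hP m i l) (pow_apply_nonneg hP m' l k)]
  exact ⟨j, mem_univ j, mul_pos hij hjk⟩

theorem pow_succ_apply_pos_iff (hP : ∀ i j, 0 ≤ P i j) {m : ℕ} {i j : ι} :
    0 < (P ^ (m + 1)) i j ↔ ∃ k, 0 < (P ^ m) i k ∧ 0 < P k j := by
  rw [pow_succ, mul_apply, sum_pos_iff_of_nonneg fun k _ ↦
    mul_nonneg (pow_apply_nonneg hP m i k) (hP k j)]
  simp only [mem_univ, true_and]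
  refine exists_congr fun k ↦ ⟨fun h ↦ ?_, fun h ↦ mul_pos h.1 h.2⟩
  exact ⟨(pow_apply_nonneg hP m i k).lt_of_ne (by rintro h0; simp [← h0] at h),
    (hP k j).lt_of_ne (by rintro h0; simp [← h0] at h)⟩

theorem pow_apply_pos_iff_posWalk (hP : ∀ i j, 0 ≤ P i j) {m : ℕ} {i j : ι} :
    0 < (P ^ m) i j ↔ PosWalk P m i j := by
  induction m generalizing j with
  | zero =>
    refine ⟨fun h ↦ ⟨fun _ ↦ i, rfl, ?_, by simp⟩, fun ⟨f, hf0, hf1, _⟩ ↦ by simp [← hf0, ← hf1]⟩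
    by_contra hij
    simp [hij] at h
  | succ m ih => simp only [pow_succ_apply_pos_iff hP, posWalk_succ_iff, ih]

theorem exists_pow_apply_pos_sub_of_mul_le (hP : ∀ i j, 0 ≤ P i j) {a m : ℕ} (ha : 0 < a)
    (hm : Fintype.card ι * a ≤ m) {i j : ι} (h : 0 < (P ^ m) i j) :
    ∃ d, 0 < d ∧ d ≤ m ∧ a ∣ d ∧ 0 < (P ^ (m - d)) i j := by
  obtain ⟨f, hf0, hfm, hf⟩ := (pow_apply_pos_iff_posWalk hP).1 h
  have hcard : #(univ ×ˢ range a : Finset (ι × ℕ)) < #(range (m + 1)) := by simp; omega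
  obtain ⟨s, hs, s', hs', hne, hss'⟩ := exists_ne_map_eq_of_card_lt_of_maps_to hcard
    (f := fun s ↦ (f s, s % a)) fun s _ ↦ by simp [Nat.mod_lt s ha]
  simp only [mem_range, Prod.mk.injEq] at hs hs' hss'
  wlog hlt : s < s' generalizing s s'
  · exact this s' s hne.symm hs' hs ⟨hss'.1.symm, hss'.2.symm⟩ (by omega)
  have hs'm : s' ≤ m := by omega
  refine ⟨s' - s, by omega, by omega, (Nat.modEq_iff_dvd' hlt.le).1 hss'.2, ?_⟩
  have hpre : PosWalk P s i (f s) := ⟨f, hf0, rfl, fun t ht ↦ hf t (by omega)⟩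
  have hsuf : PosWalk P (m - s') (f s) j :=
    ⟨fun t ↦ f (t + s'), by simp [hss'.1], by simp [Nat.sub_add_cancel hs'm, hfm],
      fun t ht ↦ by simpa [add_right_comm t 1 s'] using hf (t + s') (by omega)⟩
  have := pow_add_apply_pos hP ((pow_apply_pos_iff_posWalk hP).2 hpre)
    ((pow_apply_pos_iff_posWalk hP).2 hsuf)
  rwa [show s + (m - s') = m - (s' - s) by omega] at this

theorem exists_pow_apply_pos_lt_mul_modEq (hP : ∀ i j, 0 ≤ P i j) {a : ℕ} (ha : 0 < a) {m : ℕ}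
    {i j : ι} (h : 0 < (P ^ m) i j) :
    ∃ m' < Fintype.card ι * a, m' ≡ m [MOD a] ∧ 0 < (P ^ m') i j := by
  induction m using Nat.strong_induction_on with
  | _ m ih =>
    by_cases hm : m < Fintype.card ι * a
    · exact ⟨m, hm, rfl, h⟩
    obtain ⟨d, hd, hdm, had, h'⟩ := exists_pow_apply_pos_sub_of_mul_le hP ha (not_lt.1 hm) h
    obtain ⟨m', hm', hmod, h''⟩ := ih (m - d) (by omega) h'
    exact ⟨m', hm', hmod.trans ((Nat.modEq_iff_dvd' (Nat.sub_le m d)).2 (by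
      rwa [Nat.sub_sub_self hdm])), h''⟩

def returnTimes (hP : ∀ i j, 0 ≤ P i j) (i : ι) : AddSubmonoid ℕ where
  carrier := {m | 0 < (P ^ m) i i}
  add_mem' := pow_add_apply_pos hP
  zero_mem' := by simp

theorem exists_mem_returnTimes_le_card (hP : ∀ i j, 0 ≤ P i j) {i : ι}
    (hi : ∃ m, 1 ≤ m ∧ 0 < (P ^ m) i i) :
    ∃ a, 0 < a ∧ a ≤ Fintype.card ι ∧ a ∈ returnTimes hP i := by
  obtain ⟨m, hm, h⟩ := hi
  obtain ⟨k, hik, hki⟩ := (pow_succ_apply_pos_iff hP).1 (Nat.sub_add_cancel hm ▸ h)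
  obtain ⟨m', hm', -, h'⟩ := exists_pow_apply_pos_lt_mul_modEq hP one_pos hik
  exact ⟨m' + 1, m'.succ_pos, by omega, (pow_succ_apply_pos_iff hP).2 ⟨k, h', hki⟩⟩

theorem exists_forall_ge_mem_returnTimes (hP : ∀ i j, 0 ≤ P i j) {i : ι}
    (hi : ∀ d, (∀ m, 1 ≤ m → 0 < (P ^ m) i i → d ∣ m) → d = 1) :
    ∃ N, ∀ m ≥ N, m ∈ returnTimes hP i := by
  have hgcd : Nat.setGcd (returnTimes hP i) = 1 := hi _ fun m _ hm ↦ Nat.setGcd_dvd_of_mem hm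
  obtain ⟨N, hN⟩ := Nat.exists_mem_closure_of_ge (returnTimes hP i : Set ℕ)
  exact ⟨N, fun m hm ↦ by simpa using hN m hm (hgcd ▸ one_dvd m)⟩

theorem mem_returnTimes_of_mul_le (hP : ∀ i j, 0 ≤ P i j) {i : ι}
    (hi : ∀ d, (∀ m, 1 ≤ m → 0 < (P ^ m) i i → d ∣ m) → d = 1) {a : ℕ} (ha : 0 < a)
    (hai : a ∈ returnTimes hP i) {N : ℕ} (hN : Fintype.card ι * a ≤ N) :
    N ∈ returnTimes hP i := by
  obtain ⟨N₀, hN₀⟩ := exists_forall_ge_mem_returnTimes hP hi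
  obtain ⟨m, hm, hmod, h⟩ := exists_pow_apply_pos_lt_mul_modEq hP ha
    (hN₀ (N + a * N₀) (by nlinarith))
  obtain ⟨k, hk⟩ :=
    (Nat.modEq_iff_dvd' (by omega)).1 (hmod.trans (Nat.add_mul_mod_self_left N a N₀))
  rw [show N = m + k • a by rw [smul_eq_mul, mul_comm]; omega]
  exact add_mem h (AddSubmonoid.nsmul_mem _ hai k)

theorem pow_apply_pos_of_irreducible_of_aperiodic (hP : ∀ i j, 0 ≤ P i j)
    (hirr : ∀ i j, ∃ m, 1 ≤ m ∧ 0 < (P ^ m) i j)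
    (haper : ∀ i, ∀ d, (∀ m, 1 ≤ m → 0 < (P ^ m) i i → d ∣ m) → d = 1) (i j : ι) :
    0 < (P ^ (Fintype.card ι * Fintype.card ι + Fintype.card ι)) i j := by
  obtain ⟨a, ha, han, hai⟩ := exists_mem_returnTimes_le_card hP (hirr i i)
  obtain ⟨m₀, -, h₀⟩ := hirr i j
  obtain ⟨m, hm, -, hij⟩ := exists_pow_apply_pos_lt_mul_modEq hP one_pos h₀
  have hna : Fintype.card ι * a ≤ Fintype.card ι * Fintype.card ι := Nat.mul_le_mul_left _ han
  have hii := mem_returnTimes_of_mul_le hP (haper i) ha hai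
    (N := Fintype.card ι * Fintype.card ι + Fintype.card ι - m) (by omega)
  have hpos := pow_add_apply_pos hP hii hij
  rwa [Nat.sub_add_cancel (by omega)] at hpos

theorem pow_le_pow_apply_of_pos {p : R} (hp : 0 ≤ p) (hpP : ∀ i j, P i j ≠ 0 → p ≤ P i j)
    (hP : ∀ i j, 0 ≤ P i j) {t : ℕ} {i j : ι} (h : 0 < (P ^ t) i j) : p ^ t ≤ (P ^ t) i j := by
  induction t generalizing j with
  | zero =>
    by_cases hij : i = j
    · simp [hij]
    · simp [hij] at h
  | succ t ih =>
    obtain ⟨k, hik, hkj⟩ := (pow_succ_apply_pos_iff hP).1 h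
    calc p ^ (t + 1) = p ^ t * p := pow_succ p t
      _ ≤ (P ^ t) i k * P k j := mul_le_mul (ih hik) (hpP k j hkj.ne') hp hik.le
      _ ≤ ∑ l, (P ^ t) i l * P l j :=
        single_le_sum (fun l _ ↦ mul_nonneg (pow_apply_nonneg hP t i l) (hP l j)) (mem_univ k)
      _ = (P ^ (t + 1)) i j := by rw [pow_succ, mul_apply]

end Matrix

theorem stmt_16_general (n : ℕ) :
    ∃ t : ℕ, ∀ P : Matrix (Fin n) (Fin n) ℝ,
      (∀ k l, 0 ≤ P k l) → (∀ k, ∑ l, P k l = 1) →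
      (∀ i j : Fin n, ∃ m : ℕ, 1 ≤ m ∧ 0 < (P ^ m) i j) →
      (∀ i : Fin n, ∀ d : ℕ, (∀ m : ℕ, 1 ≤ m → 0 < (P ^ m) i i → d ∣ m) → d = 1) →
      ∀ pmin : ℝ, 0 < pmin → (∀ i j, P i j ≠ 0 → pmin ≤ P i j) →
      ∀ i j : Fin n, pmin ^ t ≤ (P ^ t) i j ∧ 0 < pmin ^ t := by
  refine ⟨n * n + n, fun P hP _ hirr haper pmin hpmin hpP i j ↦ ⟨?_, pow_pos hpmin _⟩⟩
  have h := Matrix.pow_apply_pos_of_irreducible_of_aperiodic hP hirr haper i j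
  rw [Fintype.card_fin] at h
  exact Matrix.pow_le_pow_apply_of_pos hpmin.le hpP hP h

theorem stmt_16 (n : ℕ) (hn : 1 ≤ n) :
    ∃ t : ℕ, ∀ P : Matrix (Fin n) (Fin n) ℝ,
      (∀ k l, 0 ≤ P k l) → (∀ k, ∑ l, P k l = 1) →
      (∀ i j : Fin n, ∃ m : ℕ, 1 ≤ m ∧ 0 < (P ^ m) i j) →
      (∀ i : Fin n, ∀ d : ℕ, (∀ m : ℕ, 1 ≤ m → 0 < (P ^ m) i i → d ∣ m) → d = 1) →
      ∀ pmin : ℝ, 0 < pmin → (∀ i j, P i j ≠ 0 → pmin ≤ P i j) →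
      ∀ i j : Fin n, pmin ^ t ≤ (P ^ t) i j ∧ 0 < pmin ^ t :=
  stmt_16_general n
end
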